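/- arXiv:2101.02417 — 6 statements merged into one kernel-verified Lean document; each statement's English description precedes it below -/
import Mathlib

section
/- Let μ be a probability density on ℝ^d, and let f, h be nonnegative functions with Z_f = ∫ f μ > 0 and Z_h = ∫ h μ > 0, defining normalized densities π = fμ/Z_f and p = hμ/Z_h. Then the squared Hellinger distance satisfies D_H(π,p)² ≤ (2/Z_f)·‖√f − √h‖²_{2,μ}. -/
/-!
Put `u = √(f μ)` and `v = √(h μ)` in `L²(dx)`. Then `‖u‖² = Z_f`, `‖u - v‖² = ‖√f - √h‖²_{2,μ}`,
and `2 D_H(π, p)²` is the squared distance between the unit vectors `u / ‖u‖` and `v / ‖v‖`.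
In any normed space `‖u / ‖u‖ - v / ‖v‖‖ ≤ 2 ‖u - v‖ / ‖u‖`: pass through `v / ‖u‖` and use
`|‖v‖ - ‖u‖| ≤ ‖u - v‖`.
-/

open MeasureTheory

theorem norm_normalize_sub_normalize_le {V : Type*} [NormedAddCommGroup V] [NormedSpace ℝ V]
    {u : V} (hu : u ≠ 0) (v : V) :
    ‖NormedSpace.normalize u - NormedSpace.normalize v‖ ≤ 2 * ‖u - v‖ / ‖u‖ := by
  have hu' : 0 < ‖u‖ := norm_pos_iff.mpr hu
  rcases eq_or_ne v 0 with rfl | hv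
  · rw [NormedSpace.normalize_zero_eq_zero, sub_zero, sub_zero, NormedSpace.norm_normalize hu,
      le_div_iff₀ hu']
    linarith
  have hv' : 0 < ‖v‖ := norm_pos_iff.mpr hv
  have split : NormedSpace.normalize u - NormedSpace.normalize v =
      ‖u‖⁻¹ • (u - v) + (‖u‖⁻¹ - ‖v‖⁻¹) • v := by
    simp only [NormedSpace.normalize, smul_sub, sub_smul]; abel
  have scale : ‖(‖u‖⁻¹ - ‖v‖⁻¹) • v‖ = |‖v‖ - ‖u‖| / ‖u‖ := by
    rw [norm_smul, Real.norm_eq_abs, inv_sub_inv hu'.ne' hv'.ne', abs_div, abs_mul,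
      abs_of_pos hu', abs_of_pos hv']
    field_simp
  calc ‖NormedSpace.normalize u - NormedSpace.normalize v‖
      ≤ ‖u‖⁻¹ * ‖u - v‖ + |‖v‖ - ‖u‖| / ‖u‖ := by
        rw [split, ← scale]
        exact (norm_add_le _ _).trans_eq (by rw [norm_smul, norm_inv, norm_norm])
    _ ≤ ‖u - v‖ / ‖u‖ + ‖u - v‖ / ‖u‖ := by
        rw [inv_mul_eq_div, abs_sub_comm]
        gcongr
        exact abs_norm_sub_norm_le u v
    _ = 2 * ‖u - v‖ / ‖u‖ := by ring

namespace MeasureTheory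

variable {α : Type*} [MeasurableSpace α] {μ : Measure α}

theorem Integrable.memLp_two_sqrt {g : α → ℝ} (hg : Integrable g μ) (hg0 : ∀ x, 0 ≤ g x) :
    MemLp (fun x => √(g x)) 2 μ := by
  rw [memLp_two_iff_integrable_sq hg.aemeasurable.sqrt.aestronglyMeasurable]
  simpa only [Real.sq_sqrt (hg0 _)] using hg

theorem MemLp.norm_sq_smul_toLp_sub_smul_toLp {F H : α → ℝ} (hF : MemLp F 2 μ)
    (hH : MemLp H 2 μ) (a b : ℝ) :
    ‖(a • hF.toLp F - b • hH.toLp H : Lp ℝ 2 μ)‖ ^ 2 = ∫ x, (a * F x - b * H x) ^ 2 ∂μ := by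
  rw [← MemLp.toLp_const_smul a hF, ← MemLp.toLp_const_smul b hH, ← MemLp.toLp_sub,
    ← real_inner_self_eq_norm_sq, L2.inner_def]
  refine integral_congr_ae (((hF.const_smul a).sub (hH.const_smul b)).coeFn_toLp.mono
    fun x hx => ?_)
  simp [hx, sq]

theorem MemLp.integral_sq_div_sqrt_sub_div_sqrt_le {F H : α → ℝ} (hF : MemLp F 2 μ)
    (hH : MemLp H 2 μ) (hF0 : ∫ x, F x ^ 2 ∂μ ≠ 0) :
    ∫ x, (F x / √(∫ y, F y ^ 2 ∂μ) - H x / √(∫ y, H y ^ 2 ∂μ)) ^ 2 ∂μ ≤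
      4 / (∫ x, F x ^ 2 ∂μ) * ∫ x, (F x - H x) ^ 2 ∂μ := by
  set u := hF.toLp F
  set v := hH.toLp H
  have norm_sq := hF.norm_sq_smul_toLp_sub_smul_toLp hH
  have hu : ‖u‖ ^ 2 = ∫ x, F x ^ 2 ∂μ := by
    simpa only [one_smul, zero_smul, sub_zero, one_mul, zero_mul] using norm_sq 1 0
  have hv : ‖v‖ ^ 2 = ∫ x, H x ^ 2 ∂μ := by
    simpa only [one_smul, zero_smul, zero_sub, norm_neg, one_mul, zero_mul, neg_sq]
      using norm_sq 0 1
  have huv : ‖u - v‖ ^ 2 = ∫ x, (F x - H x) ^ 2 ∂μ := by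
    simpa only [one_smul, one_mul] using norm_sq 1 1
  have hu0 : u ≠ 0 := by
    rintro hu0
    simp [hu0, ← hu] at hF0
  calc ∫ x, (F x / √(∫ y, F y ^ 2 ∂μ) - H x / √(∫ y, H y ^ 2 ∂μ)) ^ 2 ∂μ
      = ‖NormedSpace.normalize u - NormedSpace.normalize v‖ ^ 2 := by
        rw [NormedSpace.normalize, NormedSpace.normalize, norm_sq, ← hu, ← hv,
          Real.sqrt_sq (norm_nonneg _), Real.sqrt_sq (norm_nonneg _)]
        simp only [inv_mul_eq_div]
    _ ≤ (2 * ‖u - v‖ / ‖u‖) ^ 2 := by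
        gcongr
        exact norm_normalize_sub_normalize_le hu0 v
    _ = 4 / ‖u‖ ^ 2 * ‖u - v‖ ^ 2 := by ring
    _ = 4 / (∫ x, F x ^ 2 ∂μ) * ∫ x, (F x - H x) ^ 2 ∂μ := by rw [hu, huv]

end MeasureTheory

theorem stmt_4_general {d : ℕ} (μ f h : (Fin d → ℝ) → ℝ)
    (hμ0 : ∀ x, 0 ≤ μ x)
    (hf0 : ∀ x, 0 ≤ f x) (hh0 : ∀ x, 0 ≤ h x)
    (Zf Zh : ℝ) (hZf : Zf = ∫ x, f x * μ x) (hZh : Zh = ∫ x, h x * μ x)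
    (hZf0 : 0 < Zf)
    (hfi : Integrable (fun x => f x * μ x)) (hhi : Integrable (fun x => h x * μ x)) :
    (1 / 2) * ∫ x, (Real.sqrt (f x * μ x / Zf) - Real.sqrt (h x * μ x / Zh)) ^ 2 ≤
      (2 / Zf) * ∫ x, (Real.sqrt (f x) - Real.sqrt (h x)) ^ 2 * μ x := by
  have hfμ0 x : 0 ≤ f x * μ x := mul_nonneg (hf0 x) (hμ0 x)
  have hhμ0 x : 0 ≤ h x * μ x := mul_nonneg (hh0 x) (hμ0 x)
  have hZf' : Zf = ∫ x, √(f x * μ x) ^ 2 := by simp only [Real.sq_sqrt (hfμ0 _), hZf]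
  have hZh' : Zh = ∫ x, √(h x * μ x) ^ 2 := by simp only [Real.sq_sqrt (hhμ0 _), hZh]
  have hdiff x : (√(f x * μ x) - √(h x * μ x)) ^ 2 = (√(f x) - √(h x)) ^ 2 * μ x := by
    rw [Real.sqrt_mul (hf0 x), Real.sqrt_mul (hh0 x), ← sub_mul, mul_pow, Real.sq_sqrt (hμ0 x)]
  have key := (hfi.memLp_two_sqrt hfμ0).integral_sq_div_sqrt_sub_div_sqrt_le
    (hhi.memLp_two_sqrt hhμ0) (hZf' ▸ hZf0.ne')
  simp only [← hZf', ← hZh', ← Real.sqrt_div (hfμ0 _), ← Real.sqrt_div (hhμ0 _), hdiff] at key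
  rw [show 4 / Zf = 2 * (2 / Zf) by ring, mul_assoc] at key
  linarith

/-- For normalized densities `π = fμ/Z_f` and `p = hμ/Z_h`, the squared
Hellinger distance satisfies `D_H(π,p)² ≤ (2/Z_f)·‖√f − √h‖²_{2,μ}`. -/
theorem stmt_4 {d : ℕ} (μ f h : (Fin d → ℝ) → ℝ)
    (hμ0 : ∀ x, 0 ≤ μ x) (hμ1 : ∫ x, μ x = 1)
    (hf0 : ∀ x, 0 ≤ f x) (hh0 : ∀ x, 0 ≤ h x)
    (Zf Zh : ℝ) (hZf : Zf = ∫ x, f x * μ x) (hZh : Zh = ∫ x, h x * μ x)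
    (hZf0 : 0 < Zf) (hZh0 : 0 < Zh)
    (hfi : Integrable (fun x => f x * μ x)) (hhi : Integrable (fun x => h x * μ x))
    (hd : Integrable (fun x => (Real.sqrt (f x) - Real.sqrt (h x)) ^ 2 * μ x))
    (hHint : Integrable
      (fun x => (Real.sqrt (f x * μ x / Zf) - Real.sqrt (h x * μ x / Zh)) ^ 2)) :
    (1 / 2) * ∫ x, (Real.sqrt (f x * μ x / Zf) - Real.sqrt (h x * μ x / Zh)) ^ 2 ≤
      (2 / Zf) * ∫ x, (Real.sqrt (f x) - Real.sqrt (h x)) ^ 2 * μ x :=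
  stmt_4_general μ f h hμ0 hf0 hh0 Zf Zh hZf hZh hZf0 hfi hhi
end

section
/- Let Σ and Σ̂ be d×d positive semidefinite symmetric matrices, and let P̂_⊥ be the orthogonal projection onto the complement of the span of the d_r leading eigenvectors of Σ̂. Then tr(P̂_⊥ Σ P̂_⊥) ≤ Σ_{i=d_r+1}^d λ_i(Σ) + 2√(d_r)·‖Σ̂ − Σ‖_F, where eigenvalues are in nonincreasing order and ‖·‖_F is the Frobenius norm. -/
/-!
Write `Q = V Vᵀ`. Since `1 - Q` is an orthogonal projection,
`tr((1 - Q) Σ (1 - Q)) = tr Σ - tr(Vᵀ Σ V)`, and `tr(Vᵀ Σ̂ V)` is the sum of the `d_r` leading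
eigenvalues of `Σ̂`. Replacing `Σ̂` by `Σ` costs
`|tr(Q (Σ̂ - Σ))| ≤ ‖Q‖_F ‖Σ̂ - Σ‖_F = √d_r ‖Σ̂ - Σ‖_F` (Cauchy–Schwarz). The same estimate for the matrix `W` of eigenvectors of `Σ` for
`λ_1(Σ), …, λ_{d_r}(Σ)`, together with Ky Fan's maximum principle
`tr(Wᵀ Σ̂ W) ≤ λ_1(Σ̂) + ⋯ + λ_{d_r}(Σ̂)`, shows that the leading eigenvalue sum of `Σ̂` is at least
`λ_1(Σ) + ⋯ + λ_{d_r}(Σ) - √d_r ‖Σ̂ - Σ‖_F`. Combining both with `tr Σ = ∑ λ_i(Σ)` gives the bound.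
-/

open Matrix
/-- Frobenius norm of a real matrix. -/
noncomputable def frob {d : ℕ} (A : Matrix (Fin d) (Fin d) ℝ) : ℝ :=
  Real.sqrt (∑ i, ∑ j, (A i j) ^ 2)

theorem Finset.sum_mul_le_sum_of_sum_eq_card {ι : Type*} [Fintype ι]
    (s : Finset ι) (μ t : ι → ℝ) (c : ℝ)
    (hs : ∀ i ∈ s, c ≤ μ i) (hsc : ∀ i ∉ s, μ i ≤ c)
    (ht0 : ∀ i, 0 ≤ t i) (ht1 : ∀ i, t i ≤ 1) (ht : ∑ i, t i = s.card) :
    ∑ i, μ i * t i ≤ ∑ i ∈ s, μ i := by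
  classical
  have hterm : ∀ i, (μ i - c) * t i ≤ if i ∈ s then μ i - c else 0 := by
    intro i
    split_ifs with hi
    · nlinarith [hs i hi, ht1 i]
    · nlinarith [hsc i hi, ht0 i]
  calc ∑ i, μ i * t i = ∑ i, (μ i - c) * t i + c * ∑ i, t i := by
        rw [Finset.mul_sum, ← Finset.sum_add_distrib]; congr 1; ext; ring
    _ ≤ ∑ i, (if i ∈ s then μ i - c else 0) + c * s.card := by
        rw [ht]; gcongr with i; exact hterm i
    _ = ∑ i ∈ s, μ i := by
        rw [← Finset.sum_filter, Finset.filter_mem_eq_inter, Finset.univ_inter,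
          Finset.sum_sub_distrib, Finset.sum_const, nsmul_eq_mul]
        ring

theorem Fin.map_castLEEmb_univ {r d : ℕ} (hr : r ≤ d) :
    Finset.univ.map (Fin.castLEEmb hr) = Finset.univ.filter (fun i : Fin d => (i : ℕ) < r) := by
  ext i
  simp only [Finset.mem_map, Finset.mem_univ, true_and, Finset.mem_filter, coe_castLEEmb]
  exact ⟨fun ⟨j, hj⟩ => hj ▸ j.isLt, fun h => ⟨⟨i, h⟩, rfl⟩⟩

theorem Fin.sum_univ_eq_sum_castLE_add_sum_filter_le {r d : ℕ} (hr : r ≤ d) (f : Fin d → ℝ) :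
    ∑ i, f i = ∑ j : Fin r, f (Fin.castLE hr j)
      + ∑ i ∈ Finset.univ.filter (fun i : Fin d => r ≤ (i : ℕ)), f i := by
  rw [← Finset.sum_filter_not_add_sum_filter _ (fun i : Fin d => r ≤ (i : ℕ))]
  simp only [not_le, ← Fin.map_castLEEmb_univ hr, Finset.sum_map, coe_castLEEmb]

theorem Antitone.sum_mul_le_sum_castLE {r d : ℕ} (hr : r ≤ d) {μ : Fin d → ℝ} (hμ : Antitone μ)
    (t : Fin d → ℝ) (ht0 : ∀ i, 0 ≤ t i) (ht1 : ∀ i, t i ≤ 1) (ht : ∑ i, t i = r) :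
    ∑ i, μ i * t i ≤ ∑ j : Fin r, μ (Fin.castLE hr j) := by
  have hmem : ∀ i, i ∈ Finset.univ.map (Fin.castLEEmb hr) ↔ (i : ℕ) < r := by
    simp [Fin.map_castLEEmb_univ]
  obtain ⟨c, hc_le, hle_c⟩ : ∃ c, (∀ i : Fin d, (i : ℕ) < r → c ≤ μ i) ∧
      (∀ i : Fin d, r ≤ (i : ℕ) → μ i ≤ c) := by
    by_cases hrd : r < d
    · exact ⟨μ ⟨r, hrd⟩, fun i hi => hμ (Fin.mk_le_of_le_val hi.le),
        fun i hi => hμ (Fin.le_def.mpr hi)⟩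
    · obtain ⟨c, hc⟩ := (Set.finite_range μ).bddBelow
      exact ⟨c, fun i _ => hc ⟨i, rfl⟩, fun i hi => absurd (i.isLt.trans_le' hi) hrd⟩
  refine (Finset.sum_mul_le_sum_of_sum_eq_card _ μ t c (fun i hi => hc_le i ((hmem i).1 hi))
    (fun i hi => hle_c i (not_lt.1 (mt (hmem i).2 hi))) ht0 ht1 ?_).trans_eq
    (Finset.sum_map _ _ _)
  simp [ht]

section Orthonormal

variable {n r : Type*} [Fintype n] [Fintype r] [DecidableEq r] {X : Matrix n r ℝ}

theorem isIdempotentElem_mul_transpose (hX : Xᵀ * X = 1) : IsIdempotentElem (X * Xᵀ) := by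
  rw [IsIdempotentElem, Matrix.mul_assoc, ← Matrix.mul_assoc Xᵀ, hX, Matrix.one_mul]

theorem trace_mul_transpose (hX : Xᵀ * X = 1) : trace (X * Xᵀ) = Fintype.card r := by
  rw [trace_mul_comm, hX, trace_one]

theorem trace_transpose_mul_mul_eq_sum (hX : Xᵀ * X = 1) {A : Matrix n n ℝ} {ν : r → ℝ}
    (hAX : A * X = X * diagonal ν) : trace (Xᵀ * A * X) = ∑ j, ν j := by
  rw [Matrix.mul_assoc, hAX, ← Matrix.mul_assoc, hX, Matrix.one_mul, trace_diagonal]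

theorem mul_eq_mul_diagonal_of_mulVec {A : Matrix n n ℝ} {ν : r → ℝ}
    (h : ∀ j, A *ᵥ (fun i => X i j) = ν j • (fun i => X i j)) : A * X = X * diagonal ν := by
  ext i j
  rw [mul_diagonal]
  simpa [mul_apply, mulVec, dotProduct, mul_comm] using congrFun (h j) i

end Orthonormal

theorem diag_le_one_of_isIdempotentElem {n : Type*} [Fintype n] {P : Matrix n n ℝ}
    (hP : Pᵀ = P) (hPP : IsIdempotentElem P) (i : n) : P i i ≤ 1 := by
  have hsq : P i i = ∑ k, P i k ^ 2 := by
    conv_lhs => rw [← hPP.eq, mul_apply]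
    refine Finset.sum_congr rfl fun k _ => ?_
    rw [sq, ← transpose_apply P k i, hP]
  have hle : P i i ^ 2 ≤ ∑ k, P i k ^ 2 :=
    Finset.single_le_sum (f := fun k => P i k ^ 2) (fun k _ => sq_nonneg _) (Finset.mem_univ i)
  nlinarith [sq_nonneg (P i i - 1)]

theorem Matrix.IsHermitian.exists_orthonormal_eigenbasis {n : Type*} [Fintype n] [DecidableEq n]
    {A : Matrix n n ℝ} (hA : A.IsHermitian) (σ : Equiv.Perm n) :
    ∃ E : Matrix n n ℝ, Eᵀ * E = 1 ∧ A * E = E * diagonal (hA.eigenvalues ∘ σ) := by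
  set U : Matrix n n ℝ := (hA.eigenvectorUnitary : Matrix n n ℝ)
  have hU : Uᵀ * U = 1 := by
    simpa [star_eq_conjTranspose, conjTranspose_eq_transpose_of_trivial] using
      mem_unitaryGroup_iff'.mp hA.eigenvectorUnitary.2
  refine ⟨U.submatrix id σ, ?_, ?_⟩
  · rw [transpose_submatrix, ← submatrix_mul _ _ _ _ _ Function.bijective_id, hU,
      submatrix_one_equiv]
  · exact mul_eq_mul_diagonal_of_mulVec fun j => by
      simpa [U] using hA.mulVec_eigenvectorBasis (σ j)

theorem trace_transpose_mul_diagonal_mul_le {r d : ℕ} (hr : r ≤ d) {μ : Fin d → ℝ}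
    (hμ : Antitone μ) {X : Matrix (Fin d) (Fin r) ℝ} (hX : Xᵀ * X = 1) :
    trace (Xᵀ * diagonal μ * X) ≤ ∑ j : Fin r, μ (Fin.castLE hr j) := by
  set P := X * Xᵀ with hPdef
  have hP : Pᵀ = P := by rw [hPdef, transpose_mul, transpose_transpose]
  have htr : trace (Xᵀ * diagonal μ * X) = ∑ i, μ i * P i i := by
    rw [trace_mul_cycle, ← hPdef]
    simp [trace, mul_diagonal, mul_comm]
  rw [htr]
  refine hμ.sum_mul_le_sum_castLE hr _ (fun i => ?_)
    (diag_le_one_of_isIdempotentElem hP (isIdempotentElem_mul_transpose hX)) ?_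
  · simpa [hPdef, mul_apply] using Finset.sum_nonneg fun j _ => mul_self_nonneg (X i j)
  · simpa [trace] using trace_mul_transpose hX

/-- Ky Fan's maximum principle. -/
theorem trace_transpose_mul_mul_le {r d : ℕ} (hr : r ≤ d) {A E : Matrix (Fin d) (Fin d) ℝ}
    {μ : Fin d → ℝ} (hμ : Antitone μ) (hE : Eᵀ * E = 1) (hAE : A * E = E * diagonal μ)
    {W : Matrix (Fin d) (Fin r) ℝ} (hW : Wᵀ * W = 1) :
    trace (Wᵀ * A * W) ≤ ∑ j : Fin r, μ (Fin.castLE hr j) := by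
  have hEEt : E * Eᵀ = 1 := mul_eq_one_comm.mp hE
  have hA : A = E * diagonal μ * Eᵀ := by rw [← hAE, Matrix.mul_assoc, hEEt, Matrix.mul_one]
  have hconj : Wᵀ * A * W = (Eᵀ * W)ᵀ * diagonal μ * (Eᵀ * W) := by
    simp only [hA, transpose_mul, transpose_transpose, Matrix.mul_assoc]
  rw [hconj]
  refine trace_transpose_mul_diagonal_mul_le hr hμ ?_
  rw [transpose_mul, transpose_transpose, Matrix.mul_assoc, ← Matrix.mul_assoc E, hEEt,
    Matrix.one_mul, hW]

theorem frob_eq_sqrt_trace {d : ℕ} (A : Matrix (Fin d) (Fin d) ℝ) :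
    frob A = √(trace (A * Aᵀ)) := by
  simp [frob, trace, mul_apply, sq]

theorem frob_neg {d : ℕ} (A : Matrix (Fin d) (Fin d) ℝ) : frob (-A) = frob A := by
  simp [frob]

theorem trace_mul_le_frob_mul_frob {d : ℕ} (A B : Matrix (Fin d) (Fin d) ℝ) :
    trace (A * B) ≤ frob A * frob B :=
  calc trace (A * B) = ∑ p : Fin d × Fin d, A p.1 p.2 * Bᵀ p.1 p.2 := by
        simp [trace, mul_apply, Fintype.sum_prod_type]
    _ ≤ √(∑ p : Fin d × Fin d, A p.1 p.2 ^ 2) * √(∑ p : Fin d × Fin d, Bᵀ p.1 p.2 ^ 2) :=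
        Real.sum_mul_le_sqrt_mul_sqrt _ _ _
    _ = frob A * frob B := by
        simp only [frob, Fintype.sum_prod_type, transpose_apply]
        rw [Finset.sum_comm (f := fun i j => B j i ^ 2)]

theorem abs_trace_mul_le_frob_mul_frob {d : ℕ} (A B : Matrix (Fin d) (Fin d) ℝ) :
    |trace (A * B)| ≤ frob A * frob B := by
  refine abs_le.mpr ⟨?_, trace_mul_le_frob_mul_frob A B⟩
  have := trace_mul_le_frob_mul_frob (-A) B
  rw [Matrix.neg_mul, trace_neg, frob_neg] at this
  linarith

section Projection

variable {d r : ℕ} {V : Matrix (Fin d) (Fin r) ℝ}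

theorem frob_mul_transpose_self (hV : Vᵀ * V = 1) : frob (V * Vᵀ) = √r := by
  rw [frob_eq_sqrt_trace, transpose_mul, transpose_transpose,
    (isIdempotentElem_mul_transpose hV).eq, trace_mul_transpose hV, Fintype.card_fin]

theorem abs_trace_transpose_mul_mul_le (hV : Vᵀ * V = 1) (B : Matrix (Fin d) (Fin d) ℝ) :
    |trace (Vᵀ * B * V)| ≤ √r * frob B := by
  rw [trace_mul_cycle, ← frob_mul_transpose_self hV]
  exact abs_trace_mul_le_frob_mul_frob _ _

theorem trace_compl_mul_mul_compl (hV : Vᵀ * V = 1) (S : Matrix (Fin d) (Fin d) ℝ) :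
    trace ((1 - V * Vᵀ) * S * (1 - V * Vᵀ)) = trace S - trace (Vᵀ * S * V) := by
  have hcompl : (1 - V * Vᵀ) * (1 - V * Vᵀ) = 1 - V * Vᵀ := by
    rw [sub_mul, mul_sub, mul_sub, Matrix.one_mul, Matrix.mul_one, Matrix.one_mul,
      (isIdempotentElem_mul_transpose hV).eq, sub_self, sub_zero]
  rw [trace_mul_cycle, hcompl, sub_mul, Matrix.one_mul, trace_sub, ← trace_mul_cycle Vᵀ S V]

end Projection

section Submatrix

variable {n r : Type*} [Fintype n] [DecidableEq n] [DecidableEq r] {E : Matrix n n ℝ}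

theorem transpose_submatrix_mul_submatrix (hE : Eᵀ * E = 1) (f : r ↪ n) :
    (E.submatrix id f)ᵀ * E.submatrix id f = 1 := by
  rw [transpose_submatrix, ← submatrix_mul _ _ _ _ _ Function.bijective_id, hE,
    submatrix_one_embedding]

theorem mul_submatrix_eq_of_mul_eq [Fintype r] {A : Matrix n n ℝ} {μ : n → ℝ}
    (hAE : A * E = E * diagonal μ) (f : r → n) :
    A * E.submatrix id f = E.submatrix id f * diagonal (μ ∘ f) := by
  ext i j
  have := congrFun (congrFun hAE i) (f j)
  rw [mul_diagonal] at this
  rw [mul_diagonal]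
  simpa [mul_apply] using this

end Submatrix

theorem stmt_6_general {d dr : ℕ} (hdr : dr ≤ d)
    (S Sh : Matrix (Fin d) (Fin d) ℝ)
    (hS : S.PosSemidef) (hSh : Sh.PosSemidef)
    (μS μSh : Fin d → ℝ) (haSh : Antitone μSh)
    (eS : ∃ σ : Equiv.Perm (Fin d), μS = hS.1.eigenvalues ∘ σ)
    (eSh : ∃ σ : Equiv.Perm (Fin d), μSh = hSh.1.eigenvalues ∘ σ)
    (V : Matrix (Fin d) (Fin dr) ℝ)
    (hV : Vᵀ * V = 1)
    (hEig : ∀ j : Fin dr,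
      Sh.mulVec (fun i => V i j) = μSh (Fin.castLE hdr j) • (fun i => V i j)) :
    Matrix.trace ((1 - V * Vᵀ) * S * (1 - V * Vᵀ)) ≤
      (∑ i ∈ Finset.univ.filter (fun i : Fin d => dr ≤ (i : ℕ)), μS i)
        + 2 * Real.sqrt dr * frob (Sh - S) := by
  obtain ⟨σS, hμS⟩ := eS
  obtain ⟨σSh, hμSh⟩ := eSh
  obtain ⟨ES, hES, hSES⟩ := hS.1.exists_orthonormal_eigenbasis σS
  obtain ⟨ESh, hESh, hShESh⟩ := hSh.1.exists_orthonormal_eigenbasis σSh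
  rw [← hμS] at hSES
  rw [← hμSh] at hShESh
  set W := ES.submatrix id (Fin.castLE hdr)
  have hW : Wᵀ * W = 1 := transpose_submatrix_mul_submatrix hES (Fin.castLEEmb hdr)
  have hV_Sh := trace_transpose_mul_mul_eq_sum hV (mul_eq_mul_diagonal_of_mulVec hEig)
  have hW_S := trace_transpose_mul_mul_eq_sum hW (mul_submatrix_eq_of_mul_eq hSES _)
  have hW_Sh := trace_transpose_mul_mul_le hdr haSh hESh hShESh hW
  obtain ⟨-, hV_err⟩ := abs_le.mp (abs_trace_transpose_mul_mul_le hV (Sh - S))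
  obtain ⟨hW_err, -⟩ := abs_le.mp (abs_trace_transpose_mul_mul_le hW (Sh - S))
  have htrace_S : trace S = ∑ i, μS i := by
    rw [hS.1.trace_eq_sum_eigenvalues, hμS]
    exact (Equiv.sum_comp σS _).symm
  rw [trace_compl_mul_mul_compl hV, htrace_S, Fin.sum_univ_eq_sum_castLE_add_sum_filter_le hdr]
  simp only [Matrix.mul_sub, Matrix.sub_mul, trace_sub] at hV_err hW_err
  simp only [Function.comp_apply] at hW_S
  linarith

/-- With `P⊥ = 1 - V Vᵀ` the projection onto the complement of the
`dr`-dimensional leading eigensubspace of `Sh`, one has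
`tr(P⊥ S P⊥) ≤ Σ_{i>dr} λ_i(S) + 2√dr ‖Sh − S‖_F`. -/
theorem stmt_6 {d dr : ℕ} (hdr : dr ≤ d)
    (S Sh : Matrix (Fin d) (Fin d) ℝ)
    (hS : S.PosSemidef) (hSh : Sh.PosSemidef)
    (μS μSh : Fin d → ℝ) (haS : Antitone μS) (haSh : Antitone μSh)
    (eS : ∃ σ : Equiv.Perm (Fin d), μS = hS.1.eigenvalues ∘ σ)
    (eSh : ∃ σ : Equiv.Perm (Fin d), μSh = hSh.1.eigenvalues ∘ σ)
    (V : Matrix (Fin d) (Fin dr) ℝ)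
    (hV : Vᵀ * V = 1)
    (hEig : ∀ j : Fin dr,
      Sh.mulVec (fun i => V i j) = μSh (Fin.castLE hdr j) • (fun i => V i j)) :
    Matrix.trace ((1 - V * Vᵀ) * S * (1 - V * Vᵀ)) ≤
      (∑ i ∈ Finset.univ.filter (fun i : Fin d => dr ≤ (i : ℕ)), μS i)
        + 2 * Real.sqrt dr * frob (Sh - S) :=
  stmt_6_general hdr S Sh hS hSh μS μSh haSh eS eSh V hV hEig
end

section
/- Let μ be a reference density on ℝ^d = X_r ⊕ X_⊥, f a nonnegative likelihood with Z = ∫fμ > 0, g = √f, π = fμ/Z, and let φ_f be the approximation φ_f(x_r,x_⊥) = (1/Z)·f̄(x_r)·μ(x_r,x_⊥) with f̄(x_r) = ∫f(x_r,x_⊥)μ(x_⊥|x_r)dx_⊥. Then D_H(π, φ_f)² ≤ (1/Z)∫ var_{μ(x_⊥|x_r)}[g] μ̄(x_r)dx_r. -/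
open MeasureTheory

set_option linter.unusedVariables false in
lemma slice_bound {m : ℕ} (p q : (Fin m → ℝ) → ℝ)
    (hp0 : ∀ y, 0 ≤ p y) (hq0 : ∀ y, 0 ≤ q y)
    (Z : ℝ) (hZ0 : 0 < Z) (M : ℝ) (hM : 0 < M)
    (hpM : ∫ y, p y = M)
    (hpint : Integrable p) (hqpint : Integrable (fun y => q y * p y))
    (hgpint : Integrable (fun y => Real.sqrt (q y) * p y))
    (F : ℝ) (hF : F = ∫ y, q y * (p y / M)) :
    (1/2) * ∫ y, (Real.sqrt (q y * p y / Z) - Real.sqrt (F * p y / Z))^2 ≤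
      (1/Z) * ((F - (∫ y, Real.sqrt (q y) * (p y / M))^2) * M) := by
  set G := ∫ y, Real.sqrt (q y) * (p y / M) with hG
  have hM' : M ≠ 0 := ne_of_gt hM
  have hFM : ∫ y, q y * p y = F * M := by
    rw [hF]
    simp only [div_eq_mul_inv, ← mul_assoc]
    rw [integral_mul_const]
    field_simp
  have hGM : ∫ y, Real.sqrt (q y) * p y = G * M := by
    rw [hG]
    simp only [div_eq_mul_inv, ← mul_assoc]
    rw [integral_mul_const]
    field_simp
  have hF0 : 0 ≤ F := by
    rw [hF]
    exact integral_nonneg fun y => mul_nonneg (hq0 y) (div_nonneg (hp0 y) hM.le)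
  have hG0 : 0 ≤ G := by
    rw [hG]
    exact integral_nonneg fun y => mul_nonneg (Real.sqrt_nonneg _) (div_nonneg (hp0 y) hM.le)
  -- variance nonnegativity gives G^2 ≤ F
  have hvar : 0 ≤ ∫ y, (Real.sqrt (q y) - G)^2 * p y :=
    integral_nonneg fun y => mul_nonneg (sq_nonneg _) (hp0 y)
  have hexp : ∫ y, (Real.sqrt (q y) - G)^2 * p y
      = F*M - 2*G*(G*M) + G^2*M := by
    have heq : (fun y => (Real.sqrt (q y) - G)^2 * p y)
        = fun y => (q y * p y - 2*G*(Real.sqrt (q y) * p y)) + G^2 * p y := by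
      funext y
      have := Real.sq_sqrt (hq0 y)
      rw [sub_sq, this]
      ring
    have hA : Integrable (fun y => q y * p y - 2*G*(Real.sqrt (q y) * p y)) :=
      hqpint.sub (hgpint.const_mul (2*G))
    have hB : Integrable (fun y => G^2 * p y) := hpint.const_mul (G^2)
    have hC : Integrable (fun y => 2*G*(Real.sqrt (q y) * p y)) := hgpint.const_mul (2*G)
    rw [heq, integral_add hA hB, integral_sub hqpint hC, integral_const_mul, integral_const_mul,
      hFM, hGM, hpM]
  have hGF2 : G^2 ≤ F := by nlinarith [hvar, hexp, hM]
  have hGF : G ≤ Real.sqrt F := by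
    have h := Real.sqrt_le_sqrt hGF2
    rwa [Real.sqrt_sq hG0] at h
  have hkey : G^2 ≤ Real.sqrt F * G := by nlinarith [hGF, hG0]
  -- rewrite LHS integrand
  have hpt : (fun y => (Real.sqrt (q y * p y / Z) - Real.sqrt (F * p y / Z))^2)
      = fun y => ((q y * p y + F * p y) - 2*Real.sqrt F*(Real.sqrt (q y) * p y))/Z := by
    funext y
    have h1 : Real.sqrt (q y * p y / Z) = Real.sqrt (q y) * Real.sqrt (p y / Z) := by
      rw [mul_div_assoc, Real.sqrt_mul (hq0 y)]
    have h2 : Real.sqrt (F * p y / Z) = Real.sqrt F * Real.sqrt (p y / Z) := by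
      rw [mul_div_assoc, Real.sqrt_mul hF0]
    rw [h1, h2, ← sub_mul, mul_pow, Real.sq_sqrt (div_nonneg (hp0 y) hZ0.le), sub_sq,
      Real.sq_sqrt (hq0 y), Real.sq_sqrt hF0]
    field_simp
    ring
  have hLHS : ∫ y, (Real.sqrt (q y * p y / Z) - Real.sqrt (F * p y / Z))^2
      = ((F*M + F*M) - 2*Real.sqrt F*(G*M))/Z := by
    have hA : Integrable (fun y => q y * p y + F * p y) := hqpint.add (hpint.const_mul F)
    have hB : Integrable (fun y => 2*Real.sqrt F*(Real.sqrt (q y) * p y)) :=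
      hgpint.const_mul (2*Real.sqrt F)
    have hC : Integrable (fun y => F * p y) := hpint.const_mul F
    rw [hpt, integral_div, integral_sub hA hB, integral_add hqpint hC,
      integral_const_mul, integral_const_mul, hFM, hGM, hpM]
  rw [hLHS]
  have hrw : (1/2) * (((F*M + F*M) - 2*Real.sqrt F*(G*M))/Z)
      = (1/Z) * ((F*M - Real.sqrt F*(G*M))) := by ring
  rw [hrw]
  apply mul_le_mul_of_nonneg_left _ (by positivity)
  nlinarith [mul_le_mul_of_nonneg_right hkey hM.le]


/-- With `π = fμ/Z` and the marginal-likelihood approximation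
`φ_f(x_r,x_⊥) = (1/Z) f̄(x_r) μ(x_r,x_⊥)`, one has
`D_H(π, φ_f)² ≤ (1/Z)∫ var_{μ(x_⊥|x_r)}[√f] μ̄(x_r) dx_r`. -/
theorem stmt_12 {n m : ℕ}
    (μ f : (Fin n → ℝ) × (Fin m → ℝ) → ℝ)
    (hμ0 : ∀ x, 0 ≤ μ x) (hf0 : ∀ x, 0 ≤ f x)
    (hμ1 : ∫ x, μ x = 1)
    (Z : ℝ) (hZ : Z = ∫ x, f x * μ x) (hZ0 : 0 < Z)
    (μbar : (Fin n → ℝ) → ℝ)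
    (hμbar : ∀ xr, μbar xr = ∫ y, μ (xr, y)) (hμbar0 : ∀ xr, 0 < μbar xr)
    (fbar : (Fin n → ℝ) → ℝ)
    (hfbar : ∀ xr, fbar xr = ∫ y, f (xr, y) * (μ (xr, y) / μbar xr))
    (hfint : Integrable (fun x => f x * μ x))
    (hHint : Integrable
      (fun x => (Real.sqrt (f x * μ x / Z) - Real.sqrt (fbar x.1 * μ x / Z)) ^ 2))
    (hvint : Integrable (fun xr : Fin n → ℝ =>
      (fbar xr - (∫ y, Real.sqrt (f (xr, y)) * (μ (xr, y) / μbar xr)) ^ 2) * μbar xr)) :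
    (1 / 2) * ∫ x, (Real.sqrt (f x * μ x / Z) - Real.sqrt (fbar x.1 * μ x / Z)) ^ 2 ≤
      (1 / Z) * ∫ xr,
        (fbar xr - (∫ y, Real.sqrt (f (xr, y)) * (μ (xr, y) / μbar xr)) ^ 2) * μbar xr := by
  -- μ is integrable
  have hμint : Integrable μ := by
    by_contra h
    rw [integral_undef h] at hμ1
    norm_num at hμ1
  -- √f · μ is integrable
  have hgeq : (fun x => Real.sqrt (f x) * μ x) = fun x => Real.sqrt (f x * μ x * μ x) := by
    funext x
    rw [mul_assoc, Real.sqrt_mul (hf0 x), Real.sqrt_mul_self (hμ0 x)]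
  have hgmeas : AEStronglyMeasurable (fun x => Real.sqrt (f x) * μ x) volume := by
    rw [hgeq]
    exact (Real.continuous_sqrt.comp_aestronglyMeasurable
      (hfint.1.mul hμint.1))
  have hgint : Integrable (fun x => Real.sqrt (f x) * μ x) := by
    refine Integrable.mono ((hfint.add hμint).div_const 2) hgmeas ?_
    filter_upwards with x
    have h1 : 0 ≤ Real.sqrt (f x) * μ x := mul_nonneg (Real.sqrt_nonneg _) (hμ0 x)
    have h2 : Real.sqrt (f x) * μ x ≤ (f x * μ x + μ x)/2 := by
      rw [show Real.sqrt (f x) * μ x = Real.sqrt (f x * μ x * μ x) from congrFun hgeq x]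
      have hab : f x * μ x * μ x ≤ ((f x * μ x + μ x)/2)^2 := by nlinarith [sq_nonneg (f x * μ x - μ x), hf0 x, hμ0 x]
      calc Real.sqrt (f x * μ x * μ x) ≤ Real.sqrt (((f x * μ x + μ x)/2)^2) :=
            Real.sqrt_le_sqrt hab
        _ = (f x * μ x + μ x)/2 := Real.sqrt_sq
              (by have := mul_nonneg (hf0 x) (hμ0 x); have := hμ0 x; linarith)
    have h3 : 0 ≤ (f x * μ x + μ x)/2 := by
      have := mul_nonneg (hf0 x) (hμ0 x); have := hμ0 x; linarith
    simp only [Pi.add_apply, Real.norm_eq_abs, abs_of_nonneg h1, abs_of_nonneg h3]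
    exact h2
  rw [MeasureTheory.Measure.volume_eq_prod] at hHint hfint hμint hgint
  rw [show (volume : Measure ((Fin n → ℝ) × (Fin m → ℝ))) = (volume : Measure (Fin n → ℝ)).prod volume from MeasureTheory.Measure.volume_eq_prod _ _,
    MeasureTheory.integral_prod _ hHint]
  have hIint : Integrable (fun xr : Fin n → ℝ => ∫ y,
      (Real.sqrt (f (xr, y) * μ (xr, y) / Z) - Real.sqrt (fbar (xr, y).1 * μ (xr, y) / Z)) ^ 2) :=
    hHint.integral_prod_left
  rw [show (1:ℝ)/2 * ∫ xr, ∫ y, (Real.sqrt (f (xr, y) * μ (xr, y) / Z) - Real.sqrt (fbar (xr, y).1 * μ (xr, y) / Z)) ^ 2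
      = ∫ xr, (1/2) * ∫ y, (Real.sqrt (f (xr, y) * μ (xr, y) / Z) - Real.sqrt (fbar (xr, y).1 * μ (xr, y) / Z)) ^ 2
      from (integral_const_mul _ _).symm,
    show (1/Z) * ∫ xr, (fbar xr - (∫ y, Real.sqrt (f (xr, y)) * (μ (xr, y) / μbar xr)) ^ 2) * μbar xr
      = ∫ xr, (1/Z) * ((fbar xr - (∫ y, Real.sqrt (f (xr, y)) * (μ (xr, y) / μbar xr)) ^ 2) * μbar xr)
      from (integral_const_mul _ _).symm]
  refine integral_mono_ae (hIint.const_mul _) (hvint.const_mul _) ?_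
  filter_upwards [hfint.prod_right_ae, hμint.prod_right_ae, hgint.prod_right_ae]
    with xr hqp hp hgp
  have := slice_bound (fun y => μ (xr, y)) (fun y => f (xr, y))
    (fun y => hμ0 _) (fun y => hf0 _) Z hZ0 (μbar xr) (hμbar0 xr)
    (hμbar xr).symm hp hqp hgp (fbar xr) (hfbar xr)
  simpa using this
end

section
/- Under a κ-Poincaré inequality for the conditionals μ(x_⊥|x_r) and with the subspace X_r spanned by the d_r leading eigenvectors of H_1 = ∫∇log f ∇log f^T π dx, the Hellinger distance between the target π = fμ/Z and the marginal-likelihood approximation φ_f satisfies D_H(π, φ_f) ≤ (1/2)·sqrt(κ·R(X_r,H_1)), where R(X_r,H_1) = tr(P_⊥ H_1 P_⊥) = Σ_{i>d_r} λ_i(H_1). -/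
open MeasureTheory

/-- Squared Euclidean norm of the (full) gradient of `h : ℝ^n × ℝ^m → ℝ`. -/
noncomputable def gradSq {n m : ℕ} (h : (Fin n → ℝ) × (Fin m → ℝ) → ℝ)
    (x : (Fin n → ℝ) × (Fin m → ℝ)) : ℝ :=
  (∑ i, (fderiv ℝ h x (Pi.single i 1, 0)) ^ 2) +
    ∑ j, (fderiv ℝ h x (0, Pi.single j 1)) ^ 2

/-- Squared Euclidean norm of the gradient of `h` in the complement directions. -/
noncomputable def gradSqPerp {n m : ℕ} (h : (Fin n → ℝ) × (Fin m → ℝ) → ℝ)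
    (x : (Fin n → ℝ) × (Fin m → ℝ)) : ℝ :=
  ∑ j, (fderiv ℝ h x (0, Pi.single j 1)) ^ 2

/-! Fix `x_r` and let `g = √f(x_r, ·)` under the conditional law `μ(x_⊥|x_r)`, with mean `m`
and root mean square `√f̄(x_r)`. Since `0 ≤ m ≤ √f̄`,
`E(g - √f̄)² = 2√f̄(√f̄ - m) ≤ 2(f̄ - m²) = 2 Var g`, and as `g` does not depend on `x_r` the
Poincaré inequality bounds `Var g` by `κ E‖∇_⊥ g‖² = (κ/4) E[f ‖∇_⊥ log f‖²]`. Integrating over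
`x_r` against the marginal of `μ` and dividing by `Z` gives `∫ (√π - √φ_f)² ≤ (κ/2) R`. -/

lemma Real.sq_sqrt_mul_sub_sqrt_mul {t : ℝ} (ht : 0 ≤ t) (a b : ℝ) :
    (√(a * t) - √(b * t)) ^ 2 = (√a - √b) ^ 2 * t := by
  rw [Real.sqrt_mul' a ht, Real.sqrt_mul' b ht, ← sub_mul, mul_pow, Real.sq_sqrt ht]

section WeightedIntegral

variable {α : Type*} [MeasurableSpace α] {ν : Measure α} {w g : α → ℝ}

lemma integrable_mul_weight_of_integrable_sq_mul (hw0 : ∀ x, 0 ≤ w x)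
    (hg : AEStronglyMeasurable g ν) (hw : Integrable w ν)
    (hg2 : Integrable (fun x => g x ^ 2 * w x) ν) :
    Integrable (fun x => g x * w x) ν := by
  have hbound : Integrable (fun x => (w x + g x ^ 2 * w x) / 2) ν := (hw.add hg2).div_const 2
  refine hbound.mono' (hg.mul hw.aestronglyMeasurable) (Filter.Eventually.of_forall fun x => ?_)
  have hAMGM : |g x| ≤ (1 + g x ^ 2) / 2 := by nlinarith [sq_abs (g x), sq_nonneg (|g x| - 1)]
  rw [norm_mul, Real.norm_eq_abs, Real.norm_of_nonneg (hw0 x)]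
  nlinarith [mul_le_mul_of_nonneg_right hAMGM (hw0 x)]

lemma integral_sq_sub_mul_weight (hw : Integrable w ν)
    (hg : Integrable (fun x => g x * w x) ν) (hg2 : Integrable (fun x => g x ^ 2 * w x) ν)
    (a : ℝ) :
    ∫ x, (g x - a) ^ 2 * w x ∂ν
      = ∫ x, g x ^ 2 * w x ∂ν - 2 * a * ∫ x, g x * w x ∂ν + a ^ 2 * ∫ x, w x ∂ν := by
  have hexpand : ∀ x, (g x - a) ^ 2 * w x
      = g x ^ 2 * w x - 2 * a * (g x * w x) + a ^ 2 * w x := fun x => by ring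
  have hlin : Integrable (fun x => g x ^ 2 * w x - 2 * a * (g x * w x)) ν :=
    hg2.sub (hg.const_mul _)
  simp only [hexpand]
  rw [integral_add hlin (hw.const_mul _), integral_sub hg2 (hg.const_mul _),
    integral_const_mul, integral_const_mul]

lemma sq_integral_mul_weight_le (hw0 : ∀ x, 0 ≤ w x) (hw : Integrable w ν)
    (hw1 : ∫ x, w x ∂ν = 1)
    (hg : Integrable (fun x => g x * w x) ν) (hg2 : Integrable (fun x => g x ^ 2 * w x) ν) :
    (∫ x, g x * w x ∂ν) ^ 2 ≤ ∫ x, g x ^ 2 * w x ∂ν := by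
  have hvar := integral_sq_sub_mul_weight hw hg hg2 (∫ x, g x * w x ∂ν)
  have hnonneg : 0 ≤ ∫ x, (g x - ∫ x, g x * w x ∂ν) ^ 2 * w x ∂ν :=
    integral_nonneg fun x => mul_nonneg (sq_nonneg _) (hw0 x)
  rw [hw1] at hvar
  linarith

lemma integral_sq_sub_sqrt_mul_weight_le (hw0 : ∀ x, 0 ≤ w x) (hw : Integrable w ν)
    (hw1 : ∫ x, w x ∂ν = 1) (hg0 : ∀ x, 0 ≤ g x) (hg : AEStronglyMeasurable g ν)
    (hg2 : Integrable (fun x => g x ^ 2 * w x) ν) :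
    ∫ x, (g x - √(∫ x, g x ^ 2 * w x ∂ν)) ^ 2 * w x ∂ν
      ≤ 2 * (∫ x, g x ^ 2 * w x ∂ν - (∫ x, g x * w x ∂ν) ^ 2) := by
  have hgw := integrable_mul_weight_of_integrable_sq_mul hw0 hg hw hg2
  set s := ∫ x, g x ^ 2 * w x ∂ν
  set m := ∫ x, g x * w x ∂ν
  have hm0 : 0 ≤ m := integral_nonneg fun x => mul_nonneg (hg0 x) (hw0 x)
  have hms : m ≤ √s := Real.le_sqrt_of_sq_le (sq_integral_mul_weight_le hw0 hw hw1 hgw hg2)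
  have hs : √s ^ 2 = s :=
    Real.sq_sqrt (integral_nonneg fun x => mul_nonneg (sq_nonneg _) (hw0 x))
  rw [integral_sq_sub_mul_weight hw hgw hg2, hw1, hs]
  nlinarith [mul_le_mul_of_nonneg_left hms hm0]

end WeightedIntegral

lemma gradSq_comp_fiber {n m : ℕ} {F : (Fin n → ℝ) × (Fin m → ℝ) → ℝ} (xr : Fin n → ℝ)
    (x : (Fin n → ℝ) × (Fin m → ℝ)) (hF : DifferentiableAt ℝ F (xr, x.2)) :
    gradSq (fun z => F (xr, z.2)) x = gradSqPerp F (xr, x.2) := by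
  have hfiber : HasFDerivAt (fun z : (Fin n → ℝ) × (Fin m → ℝ) => (xr, z.2))
      ((ContinuousLinearMap.inr ℝ _ _).comp (ContinuousLinearMap.snd ℝ _ _)) x :=
    (hasFDerivAt_prodMk_right xr x.2).comp x hasFDerivAt_snd
  have hcomp : HasFDerivAt (fun z => F (xr, z.2))
      ((fderiv ℝ F (xr, x.2)).comp
        ((ContinuousLinearMap.inr ℝ _ _).comp (ContinuousLinearMap.snd ℝ _ _))) x :=
    hF.hasFDerivAt.comp x hfiber
  rw [gradSq, gradSqPerp, hcomp.fderiv]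
  simp [← Prod.zero_eq_mk]

lemma gradSqPerp_sqrt_eq {n m : ℕ} {f : (Fin n → ℝ) × (Fin m → ℝ) → ℝ}
    {x : (Fin n → ℝ) × (Fin m → ℝ)} (hfx : 0 < f x) (hf : DifferentiableAt ℝ f x) :
    gradSqPerp (fun z => √(f z)) x = f x / 4 * gradSqPerp (fun z => Real.log (f z)) x := by
  rw [gradSqPerp, gradSqPerp, fderiv_sqrt hf hfx.ne', fderiv.log hf hfx.ne', Finset.mul_sum]
  refine Finset.sum_congr rfl fun j _ => ?_
  have hsqrt : √(f x) ^ 2 = f x := Real.sq_sqrt hfx.le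
  simp only [FunLike.coe_smul, Pi.smul_apply, smul_eq_mul]
  field_simp
  rw [hsqrt]
  ring

lemma integral_sq_sqrt_sub_sqrt_condMean_le {n m : ℕ} (μ f : (Fin n → ℝ) × (Fin m → ℝ) → ℝ)
    (hμ0 : ∀ x, 0 ≤ μ x) (hf0 : ∀ x, 0 < f x) (hfsmooth : ContDiff ℝ 1 f)
    (κ : ℝ) (xr : Fin n → ℝ) {b : ℝ} (hb : b = ∫ y, μ (xr, y)) (hb0 : 0 < b)
    {fb : ℝ} (hfb : fb = ∫ y, f (xr, y) * (μ (xr, y) / b))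
    (hPoin : ∀ h : (Fin n → ℝ) × (Fin m → ℝ) → ℝ, ContDiff ℝ 1 h →
      (∫ y, (h (xr, y)) ^ 2 * (μ (xr, y) / b)) - (∫ y, h (xr, y) * (μ (xr, y) / b)) ^ 2 ≤
        κ * ∫ y, gradSq h (xr, y) * (μ (xr, y) / b))
    (hfμ : Integrable (fun y => f (xr, y) * μ (xr, y))) :
    ∫ y, (√(f (xr, y)) - √fb) ^ 2 * μ (xr, y)
      ≤ κ / 2 * ∫ y, gradSqPerp (fun z => Real.log (f z)) (xr, y) * (f (xr, y) * μ (xr, y)) := by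
  have hw0 : ∀ y, 0 ≤ μ (xr, y) / b := fun y => div_nonneg (hμ0 _) hb0.le
  have hμ : Integrable (fun y => μ (xr, y)) := Integrable.of_integral_ne_zero (hb ▸ hb0.ne')
  have hw1 : ∫ y, μ (xr, y) / b = 1 := by rw [integral_div, ← hb, div_self hb0.ne']
  have hf2 : ∀ y, √(f (xr, y)) ^ 2 = f (xr, y) := fun y => Real.sq_sqrt (hf0 _).le
  have hfw : Integrable (fun y => √(f (xr, y)) ^ 2 * (μ (xr, y) / b)) := by
    simpa only [hf2, mul_div_assoc] using hfμ.div_const b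
  have hrms : ∫ y, √(f (xr, y)) ^ 2 * (μ (xr, y) / b) = fb := by simp only [hf2, hfb]
  have hcompare := integral_sq_sub_sqrt_mul_weight_le (g := fun y => √(f (xr, y))) hw0
    (hμ.div_const b) hw1 (fun y => Real.sqrt_nonneg _)
    ((hfsmooth.continuous.comp (Continuous.prodMk_right xr)).sqrt.aestronglyMeasurable) hfw
  have hvar := hPoin (fun x => √(f (xr, x.2)))
    (hfsmooth.comp (contDiff_const.prodMk contDiff_snd) |>.sqrt fun x => (hf0 _).ne')
  have hgrad : ∀ y, gradSq (fun x => √(f (xr, x.2))) (xr, y) * (μ (xr, y) / b)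
      = gradSqPerp (fun z => Real.log (f z)) (xr, y) * (f (xr, y) * μ (xr, y)) / (4 * b) :=
    fun y => by
      rw [gradSq_comp_fiber (F := fun z => √(f z)) xr (xr, y)
        (((hfsmooth.differentiable one_ne_zero) _).sqrt (hf0 _).ne'),
        gradSqPerp_sqrt_eq (hf0 _) (hfsmooth.differentiable one_ne_zero _)]
      field_simp
  have hweighted : ∀ y, (√(f (xr, y)) - √fb) ^ 2 * (μ (xr, y) / b)
      = (√(f (xr, y)) - √fb) ^ 2 * μ (xr, y) / b := fun y => mul_div_assoc' ..
  simp only [hrms, hweighted, integral_div] at hcompare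
  simp only [hrms, hgrad, integral_div] at hvar
  have hbound := hcompare.trans (mul_le_mul_of_nonneg_left hvar zero_le_two)
  rw [div_le_iff₀ hb0] at hbound
  exact hbound.trans_eq (by field_simp; ring)

theorem stmt_14_general {n m : ℕ}
    (μ f : (Fin n → ℝ) × (Fin m → ℝ) → ℝ)
    (hμ0 : ∀ x, 0 ≤ μ x) (hf0 : ∀ x, 0 < f x)
    (hfsmooth : ContDiff ℝ 1 f)
    (κ : ℝ)
    (Z : ℝ) (hZ0 : 0 < Z)
    (μbar : (Fin n → ℝ) → ℝ)
    (hμbar : ∀ xr, μbar xr = ∫ y, μ (xr, y)) (hμbar0 : ∀ xr, 0 < μbar xr)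
    (fbar : (Fin n → ℝ) → ℝ)
    (hfbar : ∀ xr, fbar xr = ∫ y, f (xr, y) * (μ (xr, y) / μbar xr))
    (hPoin : ∀ xr, ∀ h : (Fin n → ℝ) × (Fin m → ℝ) → ℝ, ContDiff ℝ 1 h →
      (∫ y, (h (xr, y)) ^ 2 * (μ (xr, y) / μbar xr)) -
          (∫ y, h (xr, y) * (μ (xr, y) / μbar xr)) ^ 2 ≤
        κ * ∫ y, gradSq h (xr, y) * (μ (xr, y) / μbar xr))
    (hfint : Integrable (fun x => f x * μ x))
    (hHint : Integrable
      (fun x => (Real.sqrt (f x * μ x / Z) - Real.sqrt (fbar x.1 * μ x / Z)) ^ 2))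
    (hRint : Integrable
      (fun x => gradSqPerp (fun z => Real.log (f z)) x * (f x * μ x / Z))) :
    Real.sqrt ((1 / 2) *
        ∫ x, (Real.sqrt (f x * μ x / Z) - Real.sqrt (fbar x.1 * μ x / Z)) ^ 2) ≤
      (1 / 2) * Real.sqrt (κ *
        ∫ x, gradSqPerp (fun z => Real.log (f z)) x * (f x * μ x / Z)) := by
  have hH : ∀ x, (√(f x * μ x / Z) - √(fbar x.1 * μ x / Z)) ^ 2
      = (√(f x) - √(fbar x.1)) ^ 2 * μ x / Z := fun x => by
    simp only [mul_div_assoc, Real.sq_sqrt_mul_sub_sqrt_mul (div_nonneg (hμ0 x) hZ0.le)]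
  have hR : ∀ x, gradSqPerp (fun z => Real.log (f z)) x * (f x * μ x / Z)
      = gradSqPerp (fun z => Real.log (f z)) x * (f x * μ x) / Z := fun x => mul_div_assoc' ..
  have hkey : ∫ x, (√(f x * μ x / Z) - √(fbar x.1 * μ x / Z)) ^ 2
      ≤ κ / 2 * ∫ x, gradSqPerp (fun z => Real.log (f z)) x * (f x * μ x / Z) := by
    rw [Measure.volume_eq_prod] at hHint hRint hfint ⊢
    rw [integral_prod _ hHint, integral_prod _ hRint, ← integral_const_mul]
    refine integral_mono_ae hHint.integral_prod_left (hRint.integral_prod_left.const_mul _) ?_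
    filter_upwards [hfint.prod_right_ae] with xr hslice
    simp only [hH, hR, integral_div, ← mul_div_assoc]
    gcongr
    exact integral_sq_sqrt_sub_sqrt_condMean_le μ f hμ0 hf0 hfsmooth κ xr (hμbar xr)
      (hμbar0 xr) (hfbar xr) (hPoin xr) hslice
  calc √(1 / 2 * ∫ x, (√(f x * μ x / Z) - √(fbar x.1 * μ x / Z)) ^ 2)
      ≤ √((1 / 2) ^ 2 * (κ * ∫ x, gradSqPerp (fun z => Real.log (f z)) x * (f x * μ x / Z))) :=
        Real.sqrt_le_sqrt (by linarith)
    _ = _ := by rw [Real.sqrt_mul (by positivity), Real.sqrt_sq (by positivity)]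

/-- Under a κ-Poincaré inequality for the conditionals `μ(x_⊥|x_r)`,
with the likelihood-informed subspace given by the `x_r` coordinates, the Hellinger
distance between `π = fμ/Z` and the marginal-likelihood approximation `φ_f` is
bounded by `(1/2)·sqrt(κ·R)`, where `R = tr(P_⊥ H_1 P_⊥) = ∫ ‖∇_⊥ log f‖² π dx`. -/
theorem stmt_14 {n m : ℕ}
    (μ f : (Fin n → ℝ) × (Fin m → ℝ) → ℝ)
    (hμ0 : ∀ x, 0 ≤ μ x) (hf0 : ∀ x, 0 < f x)
    (hfsmooth : ContDiff ℝ 1 f)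
    (hμ1 : ∫ x, μ x = 1)
    (κ : ℝ) (hκ : 0 ≤ κ)
    (Z : ℝ) (hZ : Z = ∫ x, f x * μ x) (hZ0 : 0 < Z)
    (μbar : (Fin n → ℝ) → ℝ)
    (hμbar : ∀ xr, μbar xr = ∫ y, μ (xr, y)) (hμbar0 : ∀ xr, 0 < μbar xr)
    (fbar : (Fin n → ℝ) → ℝ)
    (hfbar : ∀ xr, fbar xr = ∫ y, f (xr, y) * (μ (xr, y) / μbar xr))
    (hPoin : ∀ xr, ∀ h : (Fin n → ℝ) × (Fin m → ℝ) → ℝ, ContDiff ℝ 1 h →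
      (∫ y, (h (xr, y)) ^ 2 * (μ (xr, y) / μbar xr)) -
          (∫ y, h (xr, y) * (μ (xr, y) / μbar xr)) ^ 2 ≤
        κ * ∫ y, gradSq h (xr, y) * (μ (xr, y) / μbar xr))
    (hfint : Integrable (fun x => f x * μ x))
    (hHint : Integrable
      (fun x => (Real.sqrt (f x * μ x / Z) - Real.sqrt (fbar x.1 * μ x / Z)) ^ 2))
    (hRint : Integrable
      (fun x => gradSqPerp (fun z => Real.log (f z)) x * (f x * μ x / Z))) :
    Real.sqrt ((1 / 2) *
        ∫ x, (Real.sqrt (f x * μ x / Z) - Real.sqrt (fbar x.1 * μ x / Z)) ^ 2) ≤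
      (1 / 2) * Real.sqrt (κ *
        ∫ x, gradSqPerp (fun z => Real.log (f z)) x * (f x * μ x / Z)) :=
  stmt_14_general μ f hμ0 hf0 hfsmooth κ Z hZ0 μbar hμbar hμbar0 fbar hfbar hPoin hfint hHint hRint
end

section
/- Let π = fμ/Z and φ_l = exp(l̄(x_r))μ(x)/Z_l with l̄(x_r) = ∫log f(x_r,x_⊥)μ(x_⊥|x_r)dx_⊥. Under a κ-Poincaré inequality for the conditionals μ(x_⊥|x_r), D_KL(π, φ_l) ≤ (√κ·‖f‖_{2,μ}/Z)·sqrt(R(X_r,H_0)), where ‖f‖_{2,μ} = (∫f²μ)^{1/2} and R(X_r,H_0) = tr(P_⊥ H_0 P_⊥) with H_0 = ∫∇log f ∇log f^T μ dx. -/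
/-!
The divergence splits as `D_KL(π, φ_l) = Z⁻¹ ∫ f (log f - l̄) μ + log (Z_l / Z)`. Jensen's
inequality on each fibre `{x_r} × ℝ^m` gives `Z_l ≤ Z`, so the second term is nonpositive, and
Cauchy–Schwarz bounds the first by `‖f‖_{2,μ} ‖log f - l̄‖_{2,μ} / Z`. As `l̄(x_r)` is the
conditional mean of `log f`, the Poincaré inequality on each fibre, integrated over `x_r`, gives
`‖log f - l̄‖²_{2,μ} ≤ κ ∫ ‖∇_⊥ log f‖² μ`. The Poincaré inequality only says something for
functions that are square integrable on the fibre; for `log f` this is obtained by applying it to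
the bounded truncations `c · arctan (log f / c)`, whose means stay bounded by Chebyshev's
inequality, and letting `c → ∞` with Fatou's lemma.
-/

open MeasureTheory

open Filter Topology

section WeightedIntegral

variable {α : Type*} [MeasurableSpace α] {P : Measure α} {w : α → ℝ}

theorem integrable_mul_mul_of_integrable_sq_mul {u v : α → ℝ} (hw : ∀ x, 0 ≤ w x)
    (huvw : AEStronglyMeasurable (fun x => u x * v x * w x) P)
    (hu : Integrable (fun x => u x ^ 2 * w x) P) (hv : Integrable (fun x => v x ^ 2 * w x) P) :
    Integrable (fun x => u x * v x * w x) P := by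
  refine Integrable.mono' (g := fun x => (u x ^ 2 * w x + v x ^ 2 * w x) / 2)
    ((hu.add hv).div_const 2) huvw (ae_of_all _ fun x => ?_)
  rw [Real.norm_eq_abs, abs_mul, abs_mul, abs_of_nonneg (hw x)]
  have : |u x| * |v x| ≤ (u x ^ 2 + v x ^ 2) / 2 := by
    nlinarith [sq_nonneg (|u x| - |v x|), sq_abs (u x), sq_abs (v x)]
  nlinarith [mul_le_mul_of_nonneg_right this (hw x)]

theorem integral_mul_mul_le_sqrt_mul_sqrt {u v : α → ℝ} (hw : ∀ x, 0 ≤ w x)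
    (hu : Integrable (fun x => u x ^ 2 * w x) P) (hv : Integrable (fun x => v x ^ 2 * w x) P)
    (huv : Integrable (fun x => u x * v x * w x) P) :
    ∫ x, u x * v x * w x ∂P ≤
      Real.sqrt (∫ x, u x ^ 2 * w x ∂P) * Real.sqrt (∫ x, v x ^ 2 * w x ∂P) := by
  set A := ∫ x, u x ^ 2 * w x ∂P
  set B := ∫ x, u x * v x * w x ∂P
  set C := ∫ x, v x ^ 2 * w x ∂P
  have hA : 0 ≤ A := integral_nonneg fun x => mul_nonneg (sq_nonneg _) (hw x)
  have hquad : ∀ s : ℝ, 0 ≤ A * (s * s) + 2 * B * s + C := by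
    intro s
    have h : ∫ x, (s * u x + v x) ^ 2 * w x ∂P = A * (s * s) + 2 * B * s + C := by
      rw [show (fun x => (s * u x + v x) ^ 2 * w x) = fun x =>
          (s * s) * (u x ^ 2 * w x) + (2 * s) * (u x * v x * w x) + v x ^ 2 * w x from
          funext fun x => by ring,
        integral_add ?_ hv, integral_add (hu.const_mul _) (huv.const_mul _), integral_const_mul,
        integral_const_mul]
      · ring
      · exact (hu.const_mul _).add (huv.const_mul _)
    exact h ▸ integral_nonneg fun x => mul_nonneg (sq_nonneg _) (hw x)
  have hB : B ^ 2 ≤ A * C := by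
    have := discrim_le_zero hquad
    rw [discrim] at this
    nlinarith
  calc B ≤ Real.sqrt (B ^ 2) := Real.le_sqrt_of_sq_le le_rfl
    _ ≤ Real.sqrt (A * C) := Real.sqrt_le_sqrt hB
    _ = Real.sqrt A * Real.sqrt C := Real.sqrt_mul hA C

theorem integrable_sub_sq_mul {g : α → ℝ} (c : ℝ) (hw : Integrable w P)
    (hg2 : Integrable (fun x => g x ^ 2 * w x) P) (hg : Integrable (fun x => g x * w x) P) :
    Integrable (fun x => (g x - c) ^ 2 * w x) P := by
  have h : Integrable (fun x => g x ^ 2 * w x - (2 * c) * (g x * w x) + c ^ 2 * w x) P :=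
    (hg2.sub (hg.const_mul _)).add (hw.const_mul _)
  exact h.congr (ae_of_all _ fun x => by ring)

theorem integral_sub_sq_mul {g : α → ℝ} (c : ℝ) (hw1 : ∫ x, w x ∂P = 1)
    (hg2 : Integrable (fun x => g x ^ 2 * w x) P) (hg : Integrable (fun x => g x * w x) P) :
    ∫ x, (g x - c) ^ 2 * w x ∂P =
      ∫ x, g x ^ 2 * w x ∂P - 2 * c * ∫ x, g x * w x ∂P + c ^ 2 := by
  have hw : Integrable w P := .of_integral_ne_zero (by simp [hw1])
  rw [show (fun x => (g x - c) ^ 2 * w x) = fun x =>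
      g x ^ 2 * w x - (2 * c) * (g x * w x) + c ^ 2 * w x from funext fun x => by ring,
    integral_add ?_ (hw.const_mul _), integral_sub hg2 (hg.const_mul _), integral_const_mul,
    integral_const_mul, hw1, mul_one]
  exact hg2.sub (hg.const_mul _)

theorem exp_integral_mul_le {L : α → ℝ} (hw : ∀ x, 0 ≤ w x) (hw1 : ∫ x, w x ∂P = 1)
    (hL : Integrable (fun x => L x * w x) P)
    (hexp : Integrable (fun x => Real.exp (L x) * w x) P) :
    Real.exp (∫ x, L x * w x ∂P) ≤ ∫ x, Real.exp (L x) * w x ∂P := by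
  set m := ∫ x, L x * w x ∂P
  have hw' : Integrable w P := .of_integral_ne_zero (by simp [hw1])
  have htangent : ∀ x, Real.exp m * ((1 - m) * w x + L x * w x) ≤ Real.exp (L x) * w x := by
    intro x
    have h := Real.add_one_le_exp (L x - m)
    rw [Real.exp_sub, le_div_iff₀ (Real.exp_pos m)] at h
    nlinarith [hw x, Real.exp_pos m]
  have hline : Integrable (fun x => (1 - m) * w x + L x * w x) P := (hw'.const_mul _).add hL
  replace hline := integral_mono (hline.const_mul (Real.exp m)) hexp htangent
  rwa [integral_const_mul, integral_add (hw'.const_mul _) hL, integral_const_mul, hw1,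
    mul_one, sub_add_cancel, mul_one] at hline

theorem integrable_of_tendsto_of_integral_le {F : ℕ → α → ℝ} {G : α → ℝ} {B : ℝ}
    (hF0 : ∀ k x, 0 ≤ F k x) (hF : ∀ k, Integrable (F k) P) (hG : AEStronglyMeasurable G P)
    (hlim : ∀ x, Tendsto (fun k => F k x) atTop (𝓝 (G x))) (hB : ∀ k, ∫ x, F k x ∂P ≤ B) :
    Integrable G P := by
  have hG0 : ∀ x, 0 ≤ G x := fun x => ge_of_tendsto' (hlim x) fun k => hF0 k x
  refine ⟨hG, (hasFiniteIntegral_iff_ofReal (ae_of_all _ hG0)).2 ?_⟩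
  calc ∫⁻ x, ENNReal.ofReal (G x) ∂P
      = ∫⁻ x, liminf (fun k => ENNReal.ofReal (F k x)) atTop ∂P :=
        lintegral_congr fun x =>
          ((ENNReal.continuous_ofReal.tendsto _).comp (hlim x)).liminf_eq.symm
    _ ≤ liminf (fun k => ∫⁻ x, ENNReal.ofReal (F k x) ∂P) atTop :=
        lintegral_liminf_le' fun k => (hF k).aemeasurable.ennreal_ofReal
    _ ≤ liminf (fun _ => ENNReal.ofReal B) atTop := by
        refine liminf_le_liminf (Eventually.of_forall fun k => ?_)
        rw [← ofReal_integral_eq_lintegral_ofReal (hF k) (ae_of_all _ (hF0 k))]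
        exact ENNReal.ofReal_le_ofReal (hB k)
    _ < ⊤ := by rw [liminf_const]; exact ENNReal.ofReal_lt_top

section ProbabilityWeight

variable {p : α → ℝ}

theorem abs_le_of_integral_sub_sq_mul_le {g : α → ℝ} {A : Set α} {a t V : ℝ}
    (hp0 : ∀ x, 0 ≤ p x) (hA : MeasurableSet A) (hpA : 1 / 2 ≤ ∫ x in A, p x ∂P)
    (hgA : ∀ x ∈ A, |g x| ≤ a) (hint : Integrable (fun x => (g x - t) ^ 2 * p x) P)
    (hV : ∫ x, (g x - t) ^ 2 * p x ∂P ≤ V) :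
    |t| ≤ a + Real.sqrt (2 * V) := by
  rcases le_or_gt |t| a with h | h
  · linarith [Real.sqrt_nonneg (2 * V)]
  have hpA' : IntegrableOn p A P := .of_integral_ne_zero (by linarith)
  set d := |t| - a
  have hd : ∀ x ∈ A, d ^ 2 * p x ≤ (g x - t) ^ 2 * p x := by
    intro x hx
    refine mul_le_mul_of_nonneg_right ?_ (hp0 x)
    rw [← sq_abs (g x - t), abs_sub_comm]
    have := abs_sub_abs_le_abs_sub t (g x)
    exact pow_le_pow_left₀ (by linarith) (by linarith [hgA x hx]) 2
  have hd2 : d ^ 2 ≤ 2 * V := by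
    have : d ^ 2 * (1 / 2) ≤ V := calc
      d ^ 2 * (1 / 2) ≤ d ^ 2 * ∫ x in A, p x ∂P := by gcongr
      _ = ∫ x in A, d ^ 2 * p x ∂P := (integral_const_mul _ _).symm
      _ ≤ ∫ x in A, (g x - t) ^ 2 * p x ∂P :=
        setIntegral_mono_on (hpA'.const_mul _) hint.integrableOn hA hd
      _ ≤ ∫ x, (g x - t) ^ 2 * p x ∂P :=
        setIntegral_le_integral hint (ae_of_all _ fun x => mul_nonneg (sq_nonneg _) (hp0 x))
      _ ≤ V := hV
    linarith
  linarith [Real.le_sqrt_of_sq_le hd2]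

theorem integrable_sq_mul_of_variance_le {L : α → ℝ} {g : ℕ → α → ℝ} {V : ℝ}
    (hp0 : ∀ x, 0 ≤ p x) (hp1 : ∫ x, p x ∂P = 1) (hL : Measurable L)
    (hg2 : ∀ k, Integrable (fun x => g k x ^ 2 * p x) P)
    (hg1 : ∀ k, Integrable (fun x => g k x * p x) P) (hgL : ∀ k x, |g k x| ≤ |L x|)
    (hlim : ∀ x, Tendsto (fun k => g k x) atTop (𝓝 (L x)))
    (hvar : ∀ k, ∫ x, g k x ^ 2 * p x ∂P - (∫ x, g k x * p x ∂P) ^ 2 ≤ V) :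
    Integrable (fun x => L x ^ 2 * p x) P := by
  have hp : Integrable p P := .of_integral_ne_zero (by simp [hp1])
  have hAmeas : ∀ a : ℕ, MeasurableSet {x | |L x| < a} := fun a =>
    measurableSet_lt hL.abs measurable_const
  obtain ⟨a, ha⟩ : ∃ a : ℕ, 1 / 2 ≤ ∫ x in {x | |L x| < a}, p x ∂P := by
    have hmono : Monotone fun a : ℕ => {x | |L x| < a} := fun a b hab x hx =>
      show |L x| < b from lt_of_lt_of_le hx (by exact_mod_cast hab)
    have hunion : ⋃ a : ℕ, {x | |L x| < a} = Set.univ :=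
      Set.eq_univ_of_forall fun x => Set.mem_iUnion.2 (exists_nat_gt |L x|)
    have h := tendsto_setIntegral_of_monotone hAmeas hmono (by rw [hunion]; exact hp.integrableOn)
    rw [hunion, setIntegral_univ, hp1] at h
    exact (h.eventually (eventually_ge_nhds (by norm_num : (1 : ℝ) / 2 < 1))).exists
  have hbound : ∀ k, ∫ x, g k x ^ 2 * p x ∂P ≤ V + (a + Real.sqrt (2 * V)) ^ 2 := by
    intro k
    set t := ∫ x, g k x * p x ∂P
    have hvar' : ∫ x, (g k x - t) ^ 2 * p x ∂P ≤ V := by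
      rw [integral_sub_sq_mul t hp1 (hg2 k) (hg1 k)]
      linarith [hvar k]
    have ht := abs_le_of_integral_sub_sq_mul_le hp0 (hAmeas a) ha
      (fun x hx => (hgL k x).trans hx.le) (integrable_sub_sq_mul t hp (hg2 k) (hg1 k)) hvar'
    nlinarith [hvar k, sq_abs t, pow_le_pow_left₀ (abs_nonneg t) ht 2]
  exact integrable_of_tendsto_of_integral_le (fun k x => mul_nonneg (sq_nonneg _) (hp0 x)) hg2
    ((hL.pow_const 2).aestronglyMeasurable.mul hp.aestronglyMeasurable)
    (fun x => ((hlim x).pow 2).mul_const _) hbound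

end ProbabilityWeight

end WeightedIntegral

theorem abs_arctan_le_abs (x : ℝ) : |Real.arctan x| ≤ |x| := by
  wlog hx : 0 ≤ x generalizing x
  · simpa [Real.arctan_neg] using this (-x) (by linarith)
  have h0 := Real.arctan_nonneg.2 hx
  rw [abs_of_nonneg hx, abs_of_nonneg h0]
  simpa [Real.tan_arctan] using Real.le_tan h0 (Real.arctan_lt_pi_div_two x)

theorem hasDerivAt_mul_arctan_div {c : ℝ} (hc : c ≠ 0) (s : ℝ) :
    HasDerivAt (fun s => c * Real.arctan (s / c)) (1 + (s / c) ^ 2)⁻¹ s := by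
  refine (((Real.hasDerivAt_arctan' (s / c)).comp s
    ((hasDerivAt_id s).div_const c)).const_mul c).congr_deriv ?_
  field_simp

theorem tendsto_mul_arctan_div (t : ℝ) :
    Tendsto (fun k : ℕ => ((k : ℝ) + 1) * Real.arctan (t / ((k : ℝ) + 1))) atTop (𝓝 t) := by
  rcases eq_or_ne t 0 with rfl | ht
  · simp
  have hslope : Tendsto (fun s => s⁻¹ * Real.arctan s) (𝓝[≠] 0) (𝓝 1) := by
    simpa using (Real.hasDerivAt_arctan 0).tendsto_slope_zero
  have hdiv : Tendsto (fun k : ℕ => t / ((k : ℝ) + 1)) atTop (𝓝[≠] 0) :=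
    tendsto_nhdsWithin_iff.2 ⟨tendsto_const_nhds.div_atTop
      (tendsto_atTop_add_const_right _ 1 tendsto_natCast_atTop_atTop),
      Eventually.of_forall fun k => div_ne_zero ht (by positivity)⟩
  have h := (hslope.comp hdiv).const_mul t
  rw [mul_one] at h
  refine h.congr fun k => ?_
  simp only [Function.comp_apply, inv_div]
  field_simp

theorem abs_mul_arctan_div_le {c : ℝ} (hc : 0 < c) (t : ℝ) : |c * Real.arctan (t / c)| ≤ |t| := by
  rw [abs_mul, abs_of_pos hc]
  calc c * |Real.arctan (t / c)| ≤ c * |t / c| :=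
        mul_le_mul_of_nonneg_left (abs_arctan_le_abs _) hc.le
    _ = |t| := by rw [abs_div, abs_of_pos hc]; field_simp

theorem abs_mul_arctan_div_le_mul {c : ℝ} (hc : 0 < c) (t : ℝ) :
    |c * Real.arctan (t / c)| ≤ c * (Real.pi / 2) := by
  rw [abs_mul, abs_of_pos hc]
  gcongr
  exact (abs_lt.2 ⟨Real.neg_pi_div_two_lt_arctan _, Real.arctan_lt_pi_div_two _⟩).le

theorem gradSq_comp_slice {n m : ℕ} {u : (Fin n → ℝ) × (Fin m → ℝ) → ℝ} {φ : ℝ → ℝ}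
    (xr : Fin n → ℝ) (y : Fin m → ℝ) (hu : DifferentiableAt ℝ u (xr, y))
    (hφ : DifferentiableAt ℝ φ (u (xr, y))) :
    gradSq (fun z => φ (u (xr, z.2))) (xr, y) = deriv φ (u (xr, y)) ^ 2 * gradSqPerp u (xr, y) := by
  have hslice : HasFDerivAt (fun z : (Fin n → ℝ) × (Fin m → ℝ) => (xr, z.2))
      ((0 : _ →L[ℝ] Fin n → ℝ).prod (ContinuousLinearMap.snd ℝ _ _)) (xr, y) :=
    (hasFDerivAt_const xr _).prodMk (hasFDerivAt_snd (p := (xr, y)))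
  have hcomp : HasFDerivAt (fun z : (Fin n → ℝ) × (Fin m → ℝ) => u (xr, z.2))
      ((fderiv ℝ u (xr, y)).comp ((0 : _ →L[ℝ] Fin n → ℝ).prod (ContinuousLinearMap.snd ℝ _ _)))
      (xr, y) :=
    hu.hasFDerivAt.comp (xr, y) hslice
  have h := HasDerivAt.comp_hasFDerivAt (f := fun z => u (xr, z.2)) (xr, y) hφ.hasDerivAt hcomp
  rw [Function.comp_def] at h
  simp [gradSq, gradSqPerp, h.fderiv, Finset.mul_sum, mul_pow, Prod.mk_zero_zero]

theorem gradSq_nonneg {n m : ℕ} (h : (Fin n → ℝ) × (Fin m → ℝ) → ℝ) (x) : 0 ≤ gradSq h x := by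
  unfold gradSq; positivity

theorem gradSqPerp_nonneg {n m : ℕ} (h : (Fin n → ℝ) × (Fin m → ℝ) → ℝ) (x) :
    0 ≤ gradSqPerp h x := by
  unfold gradSqPerp; positivity

theorem mul_integral_gradSq_mul_le {n m : ℕ} {κ : ℝ} (hκ : 0 ≤ κ) (xr : Fin n → ℝ)
    {p : (Fin m → ℝ) → ℝ} (hp0 : ∀ y, 0 ≤ p y) {h u : (Fin n → ℝ) × (Fin m → ℝ) → ℝ}
    (hG : Integrable (fun y => gradSqPerp u (xr, y) * p y))
    (hle : ∀ y, gradSq h (xr, y) ≤ gradSqPerp u (xr, y)) :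
    κ * ∫ y, gradSq h (xr, y) * p y ≤ κ * ∫ y, gradSqPerp u (xr, y) * p y :=
  mul_le_mul_of_nonneg_left (integral_mono_of_nonneg
    (ae_of_all _ fun y => mul_nonneg (gradSq_nonneg _ _) (hp0 y)) hG
    (ae_of_all _ fun y => mul_le_mul_of_nonneg_right (hle y) (hp0 y))) hκ

theorem integrable_sq_mul_of_poincare {n m : ℕ} {κ : ℝ} (hκ : 0 ≤ κ) (xr : Fin n → ℝ)
    {p : (Fin m → ℝ) → ℝ} (hp0 : ∀ y, 0 ≤ p y) (hp1 : ∫ y, p y = 1)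
    (hPoin : ∀ h : (Fin n → ℝ) × (Fin m → ℝ) → ℝ, ContDiff ℝ 1 h →
      (∫ y, h (xr, y) ^ 2 * p y) - (∫ y, h (xr, y) * p y) ^ 2 ≤
        κ * ∫ y, gradSq h (xr, y) * p y)
    {u : (Fin n → ℝ) × (Fin m → ℝ) → ℝ} (hu : ContDiff ℝ 1 u)
    (hG : Integrable (fun y => gradSqPerp u (xr, y) * p y)) :
    Integrable (fun y => u (xr, y) ^ 2 * p y) := by
  have hp : Integrable p := .of_integral_ne_zero (by simp [hp1])
  have hcont : Continuous fun y => u (xr, y) := hu.continuous.comp (.prodMk_right xr)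
  -- The Poincaré inequality is applied to the bounded truncations `c * arctan (u / c)`,
  -- whose gradients are no larger than that of `u`.
  set c : ℕ → ℝ := fun k => (k : ℝ) + 1
  have hc : ∀ k, 0 < c k := fun k => by positivity
  set g : ℕ → (Fin m → ℝ) → ℝ := fun k y => c k * Real.arctan (u (xr, y) / c k)
  have hg_meas : ∀ k, AEStronglyMeasurable (g k) := fun k =>
    (continuous_const.mul (Real.continuous_arctan.comp (hcont.div_const _))).aestronglyMeasurable
  have hg1 : ∀ k, Integrable (fun y => g k y * p y) := fun k =>
    hp.bdd_mul (hg_meas k) (ae_of_all _ fun y => abs_mul_arctan_div_le_mul (hc k) _)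
  have hg2 : ∀ k, Integrable (fun y => g k y ^ 2 * p y) := fun k =>
    hp.bdd_mul ((hg_meas k).pow 2) (ae_of_all _ fun y => by
      rw [norm_pow, Real.norm_eq_abs]
      exact pow_le_pow_left₀ (abs_nonneg _) (abs_mul_arctan_div_le_mul (hc k) _) 2)
  have hvar : ∀ k, (∫ y, g k y ^ 2 * p y) - (∫ y, g k y * p y) ^ 2 ≤
      κ * ∫ y, gradSqPerp u (xr, y) * p y := by
    intro k
    have hsmooth : ContDiff ℝ 1 fun z : (Fin n → ℝ) × (Fin m → ℝ) =>
        c k * Real.arctan (u (xr, z.2) / c k) :=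
      contDiff_const.mul (Real.contDiff_arctan.comp
        ((hu.comp (contDiff_const.prodMk contDiff_snd)).div_const _))
    refine (hPoin _ hsmooth).trans (mul_integral_gradSq_mul_le hκ xr hp0 hG fun y => ?_)
    have hφ := hasDerivAt_mul_arctan_div (hc k).ne' (u (xr, y))
    rw [gradSq_comp_slice xr y (hu.differentiable one_ne_zero _) hφ.differentiableAt, hφ.deriv]
    refine mul_le_of_le_one_left (gradSqPerp_nonneg _ _) ?_
    rw [inv_pow]
    exact inv_le_one_of_one_le₀ (one_le_pow₀ (le_add_of_nonneg_right (sq_nonneg _)))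
  exact integrable_sq_mul_of_variance_le hp0 hp1 hcont.measurable hg2 hg1
    (fun k y => abs_mul_arctan_div_le (hc k) _) (fun y => tendsto_mul_arctan_div _) hvar

theorem poincare_of_integrable_gradSqPerp {n m : ℕ} {κ : ℝ} (hκ : 0 ≤ κ) (xr : Fin n → ℝ)
    {p : (Fin m → ℝ) → ℝ} (hp0 : ∀ y, 0 ≤ p y) (hp1 : ∫ y, p y = 1)
    (hPoin : ∀ h : (Fin n → ℝ) × (Fin m → ℝ) → ℝ, ContDiff ℝ 1 h →
      (∫ y, h (xr, y) ^ 2 * p y) - (∫ y, h (xr, y) * p y) ^ 2 ≤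
        κ * ∫ y, gradSq h (xr, y) * p y)
    {u : (Fin n → ℝ) × (Fin m → ℝ) → ℝ} (hu : ContDiff ℝ 1 u)
    (hG : Integrable (fun y => gradSqPerp u (xr, y) * p y)) :
    Integrable (fun y => u (xr, y) ^ 2 * p y) ∧
      (∫ y, u (xr, y) ^ 2 * p y) - (∫ y, u (xr, y) * p y) ^ 2 ≤
        κ * ∫ y, gradSqPerp u (xr, y) * p y := by
  refine ⟨integrable_sq_mul_of_poincare hκ xr hp0 hp1 hPoin hu hG,
    (hPoin (fun z => u (xr, z.2)) (hu.comp (contDiff_const.prodMk contDiff_snd))).trans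
      (mul_integral_gradSq_mul_le hκ xr hp0 hG fun y => ?_)⟩
  simpa using (gradSq_comp_slice (φ := id) xr y (hu.differentiable one_ne_zero _)
    differentiableAt_id).le

theorem integrable_and_integral_le_of_ae_integral_le {α β : Type*} [MeasurableSpace α]
    [MeasurableSpace β] {μ : Measure α} {ν : Measure β} [SFinite μ] [SFinite ν] {F G : α × β → ℝ}
    (hF0 : ∀ z, 0 ≤ F z) (hF : AEStronglyMeasurable F (μ.prod ν)) (hG : Integrable G (μ.prod ν))
    (hle : ∀ᵐ x ∂μ, Integrable (fun y => F (x, y)) ν ∧ ∫ y, F (x, y) ∂ν ≤ ∫ y, G (x, y) ∂ν) :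
    Integrable F (μ.prod ν) ∧ ∫ z, F z ∂μ.prod ν ≤ ∫ z, G z ∂μ.prod ν := by
  have hFint : Integrable F (μ.prod ν) := by
    refine (integrable_prod_iff hF).2 ⟨hle.mono fun x hx => hx.1, ?_⟩
    refine hG.integral_prod_left.mono' hF.norm.integral_prod_right' (hle.mono fun x hx => ?_)
    rw [integral_congr_ae (ae_of_all _ fun y => Real.norm_of_nonneg (hF0 (x, y))),
      Real.norm_of_nonneg (integral_nonneg fun y => hF0 (x, y))]
    exact hx.2
  refine ⟨hFint, ?_⟩
  rw [integral_prod _ hFint, integral_prod _ hG]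
  exact integral_mono_ae hFint.integral_prod_left hG.integral_prod_left (hle.mono fun x hx => hx.2)

theorem klDiv_integrand_eq {a m l Z Zl : ℝ} (ha : 0 < a) (hm : 0 ≤ m) (hZ : 0 < Z)
    (hZl : 0 < Zl) :
    a * m / Z * Real.log (a * m / Z / (Real.exp l * m / Zl)) =
      a * (Real.log a - l) * m / Z + (Real.log Zl - Real.log Z) / Z * (a * m) := by
  rcases hm.eq_or_lt with rfl | hm
  · simp
  rw [Real.log_div (by positivity) (by positivity), Real.log_div (by positivity) hZ.ne',
    Real.log_div (by positivity) hZl.ne', Real.log_mul ha.ne' hm.ne',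
    Real.log_mul (Real.exp_pos l).ne' hm.ne', Real.log_exp]
  field_simp
  ring

theorem integral_klDiv_integrand_eq {α : Type*} [MeasurableSpace α] {P : Measure α}
    {f μ l : α → ℝ} {Z Zl : ℝ} (hf0 : ∀ x, 0 < f x) (hμ0 : ∀ x, 0 ≤ μ x)
    (hZ : Z = ∫ x, f x * μ x ∂P) (hZ0 : 0 < Z) (hZl0 : 0 < Zl)
    (hfμ : Integrable (fun x => f x * μ x) P)
    (hT : Integrable (fun x => f x * (Real.log (f x) - l x) * μ x) P) :
    ∫ x, f x * μ x / Z * Real.log (f x * μ x / Z / (Real.exp (l x) * μ x / Zl)) ∂P =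
      (∫ x, f x * (Real.log (f x) - l x) * μ x ∂P) / Z + (Real.log Zl - Real.log Z) := by
  rw [integral_congr_ae (ae_of_all _ fun x => klDiv_integrand_eq (hf0 x) (hμ0 x) hZ0 hZl0),
    integral_add (hT.div_const Z) (hfμ.const_mul _), integral_div, integral_const_mul, ← hZ]
  field_simp

theorem slice_poincare_and_jensen {n m : ℕ} {μ f : (Fin n → ℝ) × (Fin m → ℝ) → ℝ} {κ : ℝ}
    (hκ : 0 ≤ κ) (hμ0 : ∀ x, 0 ≤ μ x) (hf0 : ∀ x, 0 < f x) (hfsmooth : ContDiff ℝ 1 f) (xr : Fin n → ℝ)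
    {W lb : ℝ} (hW : W = ∫ y, μ (xr, y)) (hW0 : 0 < W)
    (hlb : lb = ∫ y, Real.log (f (xr, y)) * (μ (xr, y) / W))
    (hPoin : ∀ h : (Fin n → ℝ) × (Fin m → ℝ) → ℝ, ContDiff ℝ 1 h →
      (∫ y, (h (xr, y)) ^ 2 * (μ (xr, y) / W)) - (∫ y, h (xr, y) * (μ (xr, y) / W)) ^ 2 ≤
        κ * ∫ y, gradSq h (xr, y) * (μ (xr, y) / W))
    (hfs : Integrable (fun y => f (xr, y) * μ (xr, y)))
    (hGs : Integrable (fun y => gradSqPerp (fun z => Real.log (f z)) (xr, y) * μ (xr, y))) :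
    Integrable (fun y => (Real.log (f (xr, y)) - lb) ^ 2 * μ (xr, y)) ∧
      ∫ y, (Real.log (f (xr, y)) - lb) ^ 2 * μ (xr, y) ≤
        ∫ y, κ * (gradSqPerp (fun z => Real.log (f z)) (xr, y) * μ (xr, y)) ∧
      Real.exp lb * W ≤ ∫ y, f (xr, y) * μ (xr, y) := by
  set p : (Fin m → ℝ) → ℝ := fun y => μ (xr, y) / W
  replace hlb : lb = ∫ y, Real.log (f (xr, y)) * p y := hlb
  have hp0 : ∀ y, 0 ≤ p y := fun y => div_nonneg (hμ0 _) hW0.le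
  have hp1 : ∫ y, p y = 1 := by rw [integral_div, ← hW, div_self hW0.ne']
  have hp : Integrable p := .of_integral_ne_zero (by simp [hp1])
  have hweight : ∀ g : (Fin m → ℝ) → ℝ, ∫ y, g y * μ (xr, y) = W * ∫ y, g y * p y := fun g => by
    rw [← integral_const_mul]
    exact integral_congr_ae (ae_of_all _ fun y => by
      change _ = W * (g y * (μ (xr, y) / W))
      field_simp)
  have hweight_int : ∀ g : (Fin m → ℝ) → ℝ, Integrable (fun y => g y * μ (xr, y)) →
      Integrable (fun y => g y * p y) := fun g hg =>
    (hg.div_const W).congr (ae_of_all _ fun y => mul_div_assoc _ _ _)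
  have hlog : ContDiff ℝ 1 fun z => Real.log (f z) := hfsmooth.log fun z => (hf0 z).ne'
  obtain ⟨hL2, hvar⟩ :=
    poincare_of_integrable_gradSqPerp hκ xr hp0 hp1 hPoin hlog (hweight_int _ hGs)
  have hL1 : Integrable (fun y => Real.log (f (xr, y)) * p y) := by
    have hmeas : AEStronglyMeasurable (fun y => Real.log (f (xr, y)) * 1 * p y) :=
      ((hlog.continuous.comp (.prodMk_right xr)).aestronglyMeasurable.mul_const 1).mul
        hp.aestronglyMeasurable
    simpa using integrable_mul_mul_of_integrable_sq_mul (v := 1) hp0 hmeas hL2 (by simpa using hp)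
  refine ⟨?_, ?_, ?_⟩
  · refine ((integrable_sub_sq_mul lb hp hL2 hL1).const_mul W).congr (ae_of_all _ fun y => ?_)
    simp only [p]
    field_simp
  · rw [hweight, integral_const_mul, hweight, integral_sub_sq_mul lb hp1 hL2 hL1, ← hlb]
    rw [← hlb] at hvar
    nlinarith
  · have hexp := exp_integral_mul_le hp0 hp1 hL1
      (by simpa [Real.exp_log (hf0 _)] using hweight_int _ hfs)
    simp only [Real.exp_log (hf0 _), ← hlb] at hexp
    rw [hweight, mul_comm]
    exact mul_le_mul_of_nonneg_left hexp hW0.le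

theorem aestronglyMeasurable_integral_mul_div_integral {α β : Type*} [MeasurableSpace α]
    [MeasurableSpace β] {μ : Measure α} {ν : Measure β} [SFinite μ] [SFinite ν]
    {g w : α × β → ℝ} (hg : AEStronglyMeasurable g (μ.prod ν))
    (hw : AEStronglyMeasurable w (μ.prod ν)) :
    AEStronglyMeasurable (fun x => ∫ y, g (x, y) * (w (x, y) / ∫ y', w (x, y') ∂ν) ∂ν) μ := by
  have hmass := hw.integral_prod_right'.comp_quasiMeasurePreserving
    (Measure.quasiMeasurePreserving_fst (μ := μ) (ν := ν))
  simpa only [Pi.mul_apply, Pi.div_apply, Function.comp_apply] using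
    (hg.mul (hw.div₀ hmass)).integral_prod_right'

theorem integral_klDiv_integrand_le {α : Type*} [MeasurableSpace α] {P : Measure α}
    {f μ l : α → ℝ} {Z Zl V : ℝ} (hf0 : ∀ x, 0 < f x) (hμ0 : ∀ x, 0 ≤ μ x)
    (hZ : Z = ∫ x, f x * μ x ∂P) (hZ0 : 0 < Z) (hZl0 : 0 < Zl) (hZlZ : Zl ≤ Z)
    (hf : AEStronglyMeasurable f P) (hl : AEStronglyMeasurable l P)
    (hμ : AEStronglyMeasurable μ P) (hfμ : Integrable (fun x => f x * μ x) P)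
    (hf2 : Integrable (fun x => f x ^ 2 * μ x) P)
    (hv : Integrable (fun x => (Real.log (f x) - l x) ^ 2 * μ x) P)
    (hvV : ∫ x, (Real.log (f x) - l x) ^ 2 * μ x ∂P ≤ V) :
    ∫ x, f x * μ x / Z * Real.log (f x * μ x / Z / (Real.exp (l x) * μ x / Zl)) ∂P ≤
      Real.sqrt (∫ x, f x ^ 2 * μ x ∂P) * Real.sqrt V / Z := by
  have hT := integrable_mul_mul_of_integrable_sq_mul hμ0
    ((hf.mul (hf.aemeasurable.log.aestronglyMeasurable.sub hl)).mul hμ) hf2 hv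
  rw [integral_klDiv_integrand_eq hf0 hμ0 hZ hZ0 hZl0 hfμ hT]
  calc _ ≤ (∫ x, f x * (Real.log (f x) - l x) * μ x ∂P) / Z := by
        linarith [Real.log_le_log hZl0 hZlZ]
    _ ≤ Real.sqrt (∫ x, f x ^ 2 * μ x ∂P) *
          Real.sqrt (∫ x, (Real.log (f x) - l x) ^ 2 * μ x ∂P) / Z := by
        gcongr
        exact integral_mul_mul_le_sqrt_mul_sqrt hμ0 hf2 hv hT
    _ ≤ Real.sqrt (∫ x, f x ^ 2 * μ x ∂P) * Real.sqrt V / Z := by gcongr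

theorem stmt_15_general {n m : ℕ}
    (μ f : (Fin n → ℝ) × (Fin m → ℝ) → ℝ)
    (hμ0 : ∀ x, 0 ≤ μ x) (hf0 : ∀ x, 0 < f x)
    (hfsmooth : ContDiff ℝ 1 f)
    (κ : ℝ) (hκ : 0 ≤ κ)
    (Z : ℝ) (hZ : Z = ∫ x, f x * μ x) (hZ0 : 0 < Z)
    (μbar : (Fin n → ℝ) → ℝ)
    (hμbar : ∀ xr, μbar xr = ∫ y, μ (xr, y)) (hμbar0 : ∀ xr, 0 < μbar xr)
    (lbar : (Fin n → ℝ) → ℝ)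
    (hlbar : ∀ xr, lbar xr = ∫ y, Real.log (f (xr, y)) * (μ (xr, y) / μbar xr))
    (Zl : ℝ) (hZl : Zl = ∫ xr, Real.exp (lbar xr) * μbar xr) (hZl0 : 0 < Zl)
    (hPoin : ∀ xr, ∀ h : (Fin n → ℝ) × (Fin m → ℝ) → ℝ, ContDiff ℝ 1 h →
      (∫ y, (h (xr, y)) ^ 2 * (μ (xr, y) / μbar xr)) -
          (∫ y, h (xr, y) * (μ (xr, y) / μbar xr)) ^ 2 ≤
        κ * ∫ y, gradSq h (xr, y) * (μ (xr, y) / μbar xr))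
    (hfint : Integrable (fun x => f x * μ x))
    (hf2int : Integrable (fun x => (f x) ^ 2 * μ x))
    (hRint : Integrable (fun x => gradSqPerp (fun z => Real.log (f z)) x * μ x)) :
    ∫ x, (f x * μ x / Z) *
        Real.log ((f x * μ x / Z) / (Real.exp (lbar x.1) * μ x / Zl)) ≤
      (Real.sqrt κ * Real.sqrt (∫ x, (f x) ^ 2 * μ x) / Z) *
        Real.sqrt (∫ x, gradSqPerp (fun z => Real.log (f z)) x * μ x) := by
  rw [Measure.volume_eq_prod] at hZ hfint hf2int hRint ⊢
  have hslice := (hfint.prod_right_ae.and hRint.prod_right_ae).mono fun xr h =>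
    slice_poincare_and_jensen hκ hμ0 hf0 hfsmooth xr (hμbar xr) (hμbar0 xr) (hlbar xr) (hPoin xr)
      h.1 h.2
  have hZlZ : Zl ≤ Z := by
    rw [hZl, hZ, integral_prod _ hfint]
    exact integral_mono_ae (.of_integral_ne_zero (hZl ▸ hZl0.ne')) hfint.integral_prod_left
      (hslice.mono fun xr h => h.2.2)
  have hf := hfsmooth.continuous.aestronglyMeasurable (μ := volume.prod volume)
  have hlog := hf.aemeasurable.log.aestronglyMeasurable
  have hμ : AEStronglyMeasurable μ (volume.prod volume) :=
    (hfint.aestronglyMeasurable.div₀ hf).congr (ae_of_all _ fun x => by simp [(hf0 x).ne'])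
  have hlbar_meas : AEStronglyMeasurable lbar volume := by
    simpa only [← hμbar, ← hlbar] using aestronglyMeasurable_integral_mul_div_integral hlog hμ
  have hlbar_fst := hlbar_meas.comp_quasiMeasurePreserving
    (Measure.quasiMeasurePreserving_fst (ν := (volume : Measure (Fin m → ℝ))))
  obtain ⟨hvar_int, hvar_le⟩ := integrable_and_integral_le_of_ae_integral_le
    (fun x => mul_nonneg (sq_nonneg _) (hμ0 x)) (((hlog.sub hlbar_fst).pow 2).mul hμ)
    (hRint.const_mul κ) (hslice.mono fun xr h => ⟨h.1, h.2.1⟩)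
  rw [integral_const_mul] at hvar_le
  refine (integral_klDiv_integrand_le hf0 hμ0 hZ hZ0 hZl0 hZlZ hf hlbar_fst hμ hfint hf2int
    hvar_int hvar_le).trans_eq ?_
  rw [Real.sqrt_mul hκ]
  ring

/-- Under a κ-Poincaré inequality for the conditionals, the KL divergence
from the log-likelihood approximation `φ_l = exp(l̄(x_r)) μ / Z_l` satisfies
`D_KL(π, φ_l) ≤ (√κ · ‖f‖_{2,μ} / Z) · sqrt(R(X_r,H_0))`, with
`R(X_r,H_0) = ∫ ‖∇_⊥ log f‖² μ dx`. -/
theorem stmt_15 {n m : ℕ}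
    (μ f : (Fin n → ℝ) × (Fin m → ℝ) → ℝ)
    (hμ0 : ∀ x, 0 ≤ μ x) (hf0 : ∀ x, 0 < f x)
    (hfsmooth : ContDiff ℝ 1 f)
    (hμ1 : ∫ x, μ x = 1)
    (κ : ℝ) (hκ : 0 ≤ κ)
    (Z : ℝ) (hZ : Z = ∫ x, f x * μ x) (hZ0 : 0 < Z)
    (μbar : (Fin n → ℝ) → ℝ)
    (hμbar : ∀ xr, μbar xr = ∫ y, μ (xr, y)) (hμbar0 : ∀ xr, 0 < μbar xr)
    (lbar : (Fin n → ℝ) → ℝ)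
    (hlbar : ∀ xr, lbar xr = ∫ y, Real.log (f (xr, y)) * (μ (xr, y) / μbar xr))
    (Zl : ℝ) (hZl : Zl = ∫ xr, Real.exp (lbar xr) * μbar xr) (hZl0 : 0 < Zl)
    (hPoin : ∀ xr, ∀ h : (Fin n → ℝ) × (Fin m → ℝ) → ℝ, ContDiff ℝ 1 h →
      (∫ y, (h (xr, y)) ^ 2 * (μ (xr, y) / μbar xr)) -
          (∫ y, h (xr, y) * (μ (xr, y) / μbar xr)) ^ 2 ≤
        κ * ∫ y, gradSq h (xr, y) * (μ (xr, y) / μbar xr))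
    (hfint : Integrable (fun x => f x * μ x))
    (hf2int : Integrable (fun x => (f x) ^ 2 * μ x))
    (hKLint : Integrable (fun x => (f x * μ x / Z) *
      Real.log ((f x * μ x / Z) / (Real.exp (lbar x.1) * μ x / Zl))))
    (hRint : Integrable (fun x => gradSqPerp (fun z => Real.log (f z)) x * μ x)) :
    ∫ x, (f x * μ x / Z) *
        Real.log ((f x * μ x / Z) / (Real.exp (lbar x.1) * μ x / Zl)) ≤
      (Real.sqrt κ * Real.sqrt (∫ x, (f x) ^ 2 * μ x) / Z) *
        Real.sqrt (∫ x, gradSqPerp (fun z => Real.log (f z)) x * μ x) :=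
  stmt_15_general μ f hμ0 hf0 hfsmooth κ hκ Z hZ hZ0 μbar hμbar hμbar0 lbar hlbar Zl hZl hZl0 hPoin
    hfint hf2int hRint
end

section
/- In the linear Gaussian setting, let π be the posterior N((C_A+I)^{−1}u, (C_A+I)^{−1}) with u = A^T y, C_A = A^T A, and H_1 = ∫∇log f ∇log f^T π dx with ∇log f(x) = A^T(Ax−y). Then H_1 = C_A(C_A+I)^{−1}C_A + (C_A+I)^{−1} u u^T (C_A+I)^{−1}, and λ_{k+1}(H_1) ≤ λ_k(C_A)²/(1 + λ_k(C_A)) for every k. -/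
/-
Completing the square, `f · μ` is proportional to `exp (-(x - m)ᵀ B (x - m) / 2)` with
`B = C + 1`, `C = AᵀA` and `m = B⁻¹ Aᵀ y`, while `Aᵀ (A x - y) = C (x - m) - m`.
An orthogonal change of variables diagonalising `B` turns this Gaussian into a product of
one-dimensional ones, whose first and second moments give `H₁ = C B⁻¹ C + m mᵀ`.

In an eigenbasis of `C`, `C B⁻¹ C` is diagonal with entries `λ² / (1 + λ)`, increasing in
`λ ≥ 0`. A nonzero vector orthogonal to the top `k` eigenvectors of `C`, to `m` and to all but
the top `k + 2` eigenvectors of `H₁` (only `d - 1` conditions) has Rayleigh quotient at least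
`λ_{k+1}(H₁)` for `H₁` and at most `λ_k(C)² / (1 + λ_k(C))` for `C B⁻¹ C`, and the two quotients
agree on it.
-/

open MeasureTheory Matrix Real

theorem integrable_pow_mul_exp_neg_mul_sq {b : ℝ} (hb : 0 < b) (n : ℕ) :
    Integrable fun x : ℝ => x ^ n * exp (-b * x ^ 2) := by
  simpa using integrable_rpow_mul_exp_neg_mul_sq hb (s := n) (by linarith [n.cast_nonneg (α := ℝ)])

theorem integral_mul_exp_neg_mul_sq (b : ℝ) : ∫ x : ℝ, x * exp (-b * x ^ 2) = 0 := by
  have h := integral_neg_eq_self (fun x : ℝ => x * exp (-b * x ^ 2)) volume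
  simp only [neg_mul, neg_sq, integral_neg] at h ⊢
  linarith

theorem integral_sq_mul_exp_neg_mul_sq {b : ℝ} (hb : 0 < b) :
    ∫ x : ℝ, x ^ 2 * exp (-b * x ^ 2) = (2 * b)⁻¹ * ∫ x : ℝ, exp (-b * x ^ 2) := by
  have hv : ∀ x : ℝ, HasDerivAt (fun s => -(2 * b)⁻¹ * exp (-b * s ^ 2))
      (x * exp (-b * x ^ 2)) x := fun x => by
    refine (((hasDerivAt_pow 2 x).const_mul (-b)).exp.const_mul (-(2 * b)⁻¹)).congr_deriv ?_
    field_simp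
    ring
  have parts := integral_mul_deriv_eq_deriv_mul_of_integrable (u := fun x => x) (u' := fun _ => 1)
    (fun x _ => hasDerivAt_id x) (fun x _ => hv x)
    ((integrable_pow_mul_exp_neg_mul_sq hb 2).congr
      (.of_forall fun x => by simp only [Pi.mul_apply]; ring))
    (((integrable_exp_neg_mul_sq hb).const_mul (-(2 * b)⁻¹)).congr (.of_forall fun x => by simp))
    (((integrable_mul_exp_neg_mul_sq hb).const_mul (-(2 * b)⁻¹)).congr
      (.of_forall fun x => by simp only [Pi.mul_apply]; ring))
  simp only [one_mul, integral_const_mul] at parts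
  rw [neg_mul, neg_neg] at parts
  simpa [sq, mul_assoc] using parts

section ProductGaussian

variable {ι : Type*} [Fintype ι] {b : ι → ℝ}

theorem integrable_prod_pow_mul_exp_neg_mul_sq (hb : ∀ i, 0 < b i) (n : ι → ℕ) :
    Integrable fun t : ι → ℝ => (∏ i, t i ^ n i) * ∏ i, exp (-b i * t i ^ 2) := by
  rw [volume_pi]
  simpa only [← Finset.prod_mul_distrib] using
    Integrable.fintype_prod fun i => integrable_pow_mul_exp_neg_mul_sq (hb i) (n i)

theorem integral_prod_pow_mul_exp_neg_mul_sq (n : ι → ℕ) :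
    ∫ t : ι → ℝ, (∏ i, t i ^ n i) * ∏ i, exp (-b i * t i ^ 2) =
      ∏ i, ∫ s : ℝ, s ^ n i * exp (-b i * s ^ 2) := by
  rw [volume_pi]
  simpa only [← Finset.prod_mul_distrib] using
    integral_fintype_prod_eq_prod fun i (s : ℝ) => s ^ n i * exp (-b i * s ^ 2)

theorem prod_pow_single {M : Type*} [CommMonoid M] [DecidableEq ι] (t : ι → M) (p : ι) (k : ℕ) :
    ∏ i, t i ^ (Pi.single p k : ι → ℕ) i = t p ^ k := by
  simp [Pi.single_apply, pow_ite]

theorem integral_mul_prod_exp_neg_mul_sq (p : ι) :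
    ∫ t : ι → ℝ, t p * ∏ i, exp (-b i * t i ^ 2) = 0 := by
  classical
  have h := integral_prod_pow_mul_exp_neg_mul_sq (b := b) (Pi.single p 1)
  rw [Finset.prod_eq_zero (Finset.mem_univ p)
    (by simpa using integral_mul_exp_neg_mul_sq (b p))] at h
  simpa only [prod_pow_single, pow_one] using h

theorem integral_mul_mul_prod_exp_neg_mul_sq [DecidableEq ι] (hb : ∀ i, 0 < b i) (p q : ι) :
    ∫ t : ι → ℝ, t p * t q * ∏ i, exp (-b i * t i ^ 2) =
      if p = q then (2 * b p)⁻¹ * ∫ t : ι → ℝ, ∏ i, exp (-b i * t i ^ 2) else 0 := by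
  have h := integral_prod_pow_mul_exp_neg_mul_sq (b := b) (Pi.single p 1 + Pi.single q 1)
  simp only [Pi.add_apply, pow_add, Finset.prod_mul_distrib, prod_pow_single, pow_one] at h
  rw [h]
  split_ifs with hpq
  · subst hpq
    have h0 := integral_prod_pow_mul_exp_neg_mul_sq (b := b) 0
    simp only [Pi.zero_apply, pow_zero, Finset.prod_const_one, one_mul] at h0
    rw [h0, Fintype.prod_eq_mul_prod_compl p,
      Fintype.prod_eq_mul_prod_compl p (fun i => ∫ s, exp _),
      Finset.prod_congr rfl fun i hi => by
        rw [Pi.single_eq_of_ne (Finset.mem_compl.1 hi ∘ Finset.mem_singleton.2)]]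
    simp only [Pi.single_eq_same, pow_zero, one_pow, one_mul, pow_one, ← sq,
      integral_sq_mul_exp_neg_mul_sq (hb p), mul_assoc]
  · exact Finset.prod_eq_zero (Finset.mem_univ p)
      (by simpa [hpq] using integral_mul_exp_neg_mul_sq (b p))

theorem integrable_mul_prod_exp_neg_mul_sq (hb : ∀ i, 0 < b i) (p : ι) :
    Integrable fun t : ι → ℝ => t p * ∏ i, exp (-b i * t i ^ 2) := by
  classical
  simpa only [prod_pow_single, pow_one] using
    integrable_prod_pow_mul_exp_neg_mul_sq hb (Pi.single p 1)

theorem integrable_mul_mul_prod_exp_neg_mul_sq (hb : ∀ i, 0 < b i) (p q : ι) :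
    Integrable fun t : ι → ℝ => t p * t q * ∏ i, exp (-b i * t i ^ 2) := by
  classical
  have h := integrable_prod_pow_mul_exp_neg_mul_sq hb (Pi.single p 1 + Pi.single q 1)
  simp only [Pi.add_apply, pow_add, Finset.prod_mul_distrib, prod_pow_single, pow_one] at h
  exact h

theorem dotProduct_mul_eq_sum {R : Type*} [CommSemiring R] (a t : ι → R) (w : R) :
    a ⬝ᵥ t * w = ∑ p, a p * (t p * w) := by
  simp only [dotProduct, Finset.sum_mul, mul_assoc]

theorem integrable_dotProduct_mul_prod_exp_neg_mul_sq (hb : ∀ i, 0 < b i) (a : ι → ℝ) :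
    Integrable fun t : ι → ℝ => a ⬝ᵥ t * ∏ i, exp (-b i * t i ^ 2) := by
  simp only [dotProduct_mul_eq_sum]
  exact integrable_finsetSum _ fun p _ => (integrable_mul_prod_exp_neg_mul_sq hb p).const_mul _

theorem integral_dotProduct_mul_prod_exp_neg_mul_sq (hb : ∀ i, 0 < b i) (a : ι → ℝ) :
    ∫ t : ι → ℝ, a ⬝ᵥ t * ∏ i, exp (-b i * t i ^ 2) = 0 := by
  simp only [dotProduct_mul_eq_sum]
  rw [integral_finsetSum _ fun p _ => (integrable_mul_prod_exp_neg_mul_sq hb p).const_mul _]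
  simp_rw [integral_const_mul, integral_mul_prod_exp_neg_mul_sq, mul_zero, Finset.sum_const_zero]

theorem dotProduct_mul_dotProduct_mul_eq_sum {R : Type*} [CommSemiring R] (a a' t : ι → R)
    (w : R) :
    a ⬝ᵥ t * (a' ⬝ᵥ t) * w = ∑ p, ∑ q, a p * a' q * (t p * t q * w) := by
  rw [dotProduct, dotProduct, Finset.sum_mul_sum, Finset.sum_mul]
  simp_rw [Finset.sum_mul]
  exact Finset.sum_congr rfl fun p _ => Finset.sum_congr rfl fun q _ => by ring

theorem integrable_dotProduct_mul_dotProduct_mul_prod_exp_neg_mul_sq (hb : ∀ i, 0 < b i)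
    (a a' : ι → ℝ) :
    Integrable fun t : ι → ℝ => a ⬝ᵥ t * (a' ⬝ᵥ t) * ∏ i, exp (-b i * t i ^ 2) := by
  simp only [dotProduct_mul_dotProduct_mul_eq_sum]
  exact integrable_finsetSum _ fun p _ => integrable_finsetSum _ fun q _ =>
    (integrable_mul_mul_prod_exp_neg_mul_sq hb p q).const_mul _

theorem integral_dotProduct_mul_dotProduct_mul_prod_exp_neg_mul_sq [DecidableEq ι]
    (hb : ∀ i, 0 < b i) (a a' : ι → ℝ) :
    ∫ t : ι → ℝ, a ⬝ᵥ t * (a' ⬝ᵥ t) * ∏ i, exp (-b i * t i ^ 2) =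
      (∑ i, a i * a' i * (2 * b i)⁻¹) * ∫ t : ι → ℝ, ∏ i, exp (-b i * t i ^ 2) := by
  simp only [dotProduct_mul_dotProduct_mul_eq_sum]
  rw [integral_finsetSum _ fun p _ => integrable_finsetSum _ fun q _ =>
    (integrable_mul_mul_prod_exp_neg_mul_sq hb p q).const_mul _]
  simp_rw [integral_finsetSum _ fun q _ =>
      (integrable_mul_mul_prod_exp_neg_mul_sq hb _ q).const_mul _, integral_const_mul,
    integral_mul_mul_prod_exp_neg_mul_sq hb]
  simp [Finset.sum_mul, mul_assoc]

theorem integral_affine_mul_affine_mul_prod_exp_neg_mul_sq (hb : ∀ i, 0 < b i)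
    (a a' : ι → ℝ) (α α' : ℝ) :
    ∫ t : ι → ℝ, (a ⬝ᵥ t + α) * (a' ⬝ᵥ t + α') * ∏ i, exp (-b i * t i ^ 2) =
      (∑ i, a i * a' i * (2 * b i)⁻¹ + α * α') * ∫ t : ι → ℝ, ∏ i, exp (-b i * t i ^ 2) := by
  classical
  have hw : Integrable fun t : ι → ℝ => ∏ i, exp (-b i * t i ^ 2) := by
    simpa using integrable_prod_pow_mul_exp_neg_mul_sq hb 0
  have expand : ∀ t : ι → ℝ, (a ⬝ᵥ t + α) * (a' ⬝ᵥ t + α') * ∏ i, exp (-b i * t i ^ 2) =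
      a ⬝ᵥ t * (a' ⬝ᵥ t) * ∏ i, exp (-b i * t i ^ 2) + α' * (a ⬝ᵥ t * ∏ i, exp (-b i * t i ^ 2)) +
        α * (a' ⬝ᵥ t * ∏ i, exp (-b i * t i ^ 2)) + α * α' * ∏ i, exp (-b i * t i ^ 2) :=
    fun t => by ring
  have h2 := integrable_dotProduct_mul_dotProduct_mul_prod_exp_neg_mul_sq hb a a'
  have h1 := integrable_dotProduct_mul_prod_exp_neg_mul_sq hb
  simp_rw [expand]
  rw [integral_add, integral_add, integral_add, integral_const_mul, integral_const_mul,
    integral_const_mul,    integral_dotProduct_mul_dotProduct_mul_prod_exp_neg_mul_sq hb,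
    integral_dotProduct_mul_prod_exp_neg_mul_sq hb, integral_dotProduct_mul_prod_exp_neg_mul_sq hb]
  · ring
  exacts [h2, (h1 a).const_mul _, h2.add ((h1 a).const_mul _), (h1 a').const_mul _,
    (h2.add ((h1 a).const_mul _)).add ((h1 a').const_mul _), hw.const_mul _]

theorem integral_prod_exp_neg_mul_sq_pos (hb : ∀ i, 0 < b i) :
    0 < ∫ t : ι → ℝ, ∏ i, exp (-b i * t i ^ 2) := by
  have h := integral_prod_pow_mul_exp_neg_mul_sq (b := b) 0
  simp only [Pi.zero_apply, pow_zero, Finset.prod_const_one, one_mul] at h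
  rw [h]
  exact Finset.prod_pos fun i _ => by
    rw [integral_gaussian]
    exact sqrt_pos.2 (div_pos pi_pos (hb i))

end ProductGaussian

theorem dotProduct_mulVec_eq_star_mulVec_dotProduct {ι : Type*} [Fintype ι] (U : Matrix ι ι ℝ)
    (a t : ι → ℝ) :
    a ⬝ᵥ U *ᵥ t = (star U *ᵥ a) ⬝ᵥ t := by
  rw [dotProduct_mulVec, star_eq_conjTranspose, conjTranspose_eq_transpose_of_trivial,
    mulVec_transpose]

section UnitaryConj

variable {ι : Type*} [Fintype ι] [DecidableEq ι]

theorem dotProduct_conj_diagonal_mulVec (U : Matrix ι ι ℝ) (e x y : ι → ℝ) :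
    x ⬝ᵥ (U * diagonal e * star U) *ᵥ y = ∑ j, e j * (star U *ᵥ x) j * (star U *ᵥ y) j := by
  rw [← mulVec_mulVec, ← mulVec_mulVec, dotProduct_mulVec, star_eq_conjTranspose,
    conjTranspose_eq_transpose_of_trivial, ← mulVec_transpose]
  simp only [dotProduct, mulVec_diagonal]
  exact Finset.sum_congr rfl fun j _ => by ring

theorem conj_diagonal_inv {U : Matrix ι ι ℝ} (hU : U ∈ unitaryGroup ι ℝ) {e : ι → ℝ}
    (he : ∀ i, e i ≠ 0) : (U * diagonal e * star U)⁻¹ = U * diagonal e⁻¹ * star U := by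
  refine inv_eq_left_inv ?_
  calc U * diagonal e⁻¹ * star U * (U * diagonal e * star U)
      = U * (diagonal e⁻¹ * (star U * U) * diagonal e) * star U := by simp only [Matrix.mul_assoc]
    _ = 1 := by
      rw [mem_unitaryGroup_iff'.mp hU, Matrix.mul_one, diagonal_mul_diagonal]
      simp [inv_mul_cancel₀ (he _), mem_unitaryGroup_iff.mp hU]

theorem sum_sq_star_mulVec {U : Matrix ι ι ℝ} (hU : U ∈ unitaryGroup ι ℝ) (x : ι → ℝ) :
    ∑ j, (star U *ᵥ x) j ^ 2 = x ⬝ᵥ x := by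
  have h := dotProduct_conj_diagonal_mulVec U (fun _ => 1) x x
  rw [diagonal_one, Matrix.mul_one, mem_unitaryGroup_iff.mp hU, one_mulVec] at h
  simp [h, sq]

theorem conj_diagonal_mul_inv_add_one_mul {U : Matrix ι ι ℝ} (hU : U ∈ unitaryGroup ι ℝ)
    {e : ι → ℝ} (he : ∀ i, 0 ≤ e i) :
    U * diagonal e * star U * (U * diagonal e * star U + 1)⁻¹ * (U * diagonal e * star U) =
      U * diagonal (fun i => e i ^ 2 / (1 + e i)) * star U := by
  have hadd : U * diagonal e * star U + 1 = U * diagonal (fun i => e i + 1) * star U := by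
    rw [← diagonal_add, diagonal_one, Matrix.mul_add, Matrix.add_mul, Matrix.mul_one,
      mem_unitaryGroup_iff.mp hU]
  rw [hadd, conj_diagonal_inv hU fun i => (by linarith [he i] : 0 < e i + 1).ne']
  calc U * diagonal e * star U * (U * diagonal (fun i => e i + 1)⁻¹ * star U) *
        (U * diagonal e * star U)
      = U * (diagonal e * (star U * U) * diagonal (fun i => e i + 1)⁻¹ * (star U * U) *
          diagonal e) *
          star U := by simp only [Matrix.mul_assoc]
    _ = U * diagonal (fun i => e i ^ 2 / (1 + e i)) * star U := by
      rw [mem_unitaryGroup_iff'.mp hU, Matrix.mul_one, Matrix.mul_one, diagonal_mul_diagonal,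
        diagonal_mul_diagonal]
      congr 3
      funext i
      simp only [Pi.inv_apply]
      ring

theorem Matrix.IsHermitian.exists_conj_diagonal {A : Matrix ι ι ℝ} (hA : A.IsHermitian) :
    ∃ U ∈ unitaryGroup ι ℝ, A = U * diagonal hA.eigenvalues * star U :=
  ⟨_, hA.eigenvectorUnitary.2, by simpa [Unitary.conjStarAlgAut_apply] using hA.spectral_theorem⟩

theorem Matrix.PosDef.exists_conj_diagonal {B : Matrix ι ι ℝ} (hB : B.PosDef) :
    ∃ U ∈ unitaryGroup ι ℝ, ∃ e : ι → ℝ, (∀ i, 0 < e i) ∧ B = U * diagonal e * star U :=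
  let ⟨U, hU, hBU⟩ := hB.1.exists_conj_diagonal
  ⟨U, hU, _, hB.eigenvalues_pos, hBU⟩

theorem integral_comp_unitary_mulVec {E : Type*} [NormedAddCommGroup E] [NormedSpace ℝ E]
    {U : Matrix ι ι ℝ} (hU : U ∈ unitaryGroup ι ℝ) (F : (ι → ℝ) → E) :
    ∫ t, F (U *ᵥ t) = ∫ z, F z := by
  have hdet : |U.det| = 1 := by
    have h := (det_of_mem_unitary hU).1
    rw [star_trivial] at h
    exact (abs_eq zero_le_one).2 (mul_self_eq_one_iff.1 h)
  have hmap : Measure.map (Matrix.toLin' U) volume = volume := by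
    rw [Real.map_matrix_volume_pi_eq_smul_volume_pi (by simp [← abs_ne_zero, hdet]), abs_inv,
      hdet, inv_one, ENNReal.ofReal_one, one_smul]
  let L := (UnitaryGroup.toLinearEquiv ⟨U, hU⟩).toContinuousLinearEquiv
  have hpres : MeasurePreserving L := ⟨L.continuous.measurable, hmap⟩
  exact hpres.integral_comp L.toHomeomorph.measurableEmbedding F

theorem exp_neg_quadratic_conj_diagonal {U : Matrix ι ι ℝ} (hU : U ∈ unitaryGroup ι ℝ)
    (e t : ι → ℝ) :
    exp (-((U *ᵥ t) ⬝ᵥ (U * diagonal e * star U) *ᵥ (U *ᵥ t)) / 2) =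
      ∏ i, exp (-(e i / 2) * t i ^ 2) := by
  rw [dotProduct_conj_diagonal_mulVec, mulVec_mulVec, mem_unitaryGroup_iff'.mp hU, one_mulVec,
    ← Real.exp_sum, neg_div, Finset.sum_div, ← Finset.sum_neg_distrib]
  exact congrArg exp (Finset.sum_congr rfl fun i _ => by ring)

variable [LinearOrder ι] {U : Matrix ι ι ℝ} {e : ι → ℝ} {σ : Equiv.Perm ι}

theorem le_dotProduct_conj_diagonal_mulVec (hU : U ∈ unitaryGroup ι ℝ) (he : Antitone (e ∘ σ))
    {k : ι} {x : ι → ℝ} (hx : ∀ i, k < i → (star U *ᵥ x) (σ i) = 0) :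
    e (σ k) * (x ⬝ᵥ x) ≤ x ⬝ᵥ (U * diagonal e * star U) *ᵥ x := by
  rw [dotProduct_conj_diagonal_mulVec, ← sum_sq_star_mulVec hU, Finset.mul_sum,
    ← Equiv.sum_comp σ]
  conv_rhs => rw [← Equiv.sum_comp σ]
  refine Finset.sum_le_sum fun i _ => ?_
  rcases lt_or_ge k i with hki | hik
  · simp [hx i hki]
  · rw [mul_assoc, ← sq]
    exact mul_le_mul_of_nonneg_right (he hik) (sq_nonneg _)

theorem dotProduct_conj_diagonal_mulVec_le (hU : U ∈ unitaryGroup ι ℝ) (he : Antitone (e ∘ σ))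
    {k : ι} {x : ι → ℝ} (hx : ∀ i, i < k → (star U *ᵥ x) (σ i) = 0) :
    x ⬝ᵥ (U * diagonal e * star U) *ᵥ x ≤ e (σ k) * (x ⬝ᵥ x) := by
  rw [dotProduct_conj_diagonal_mulVec, ← sum_sq_star_mulVec hU, Finset.mul_sum,
    ← Equiv.sum_comp σ]
  conv_rhs => rw [← Equiv.sum_comp σ]
  refine Finset.sum_le_sum fun i _ => ?_
  rcases lt_or_ge i k with hik | hki
  · simp [hx i hik]
  · rw [mul_assoc, ← sq]
    exact mul_le_mul_of_nonneg_right (he hki) (sq_nonneg _)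

end UnitaryConj

section Gaussian

variable {ι : Type*} [Fintype ι] [DecidableEq ι] {B : Matrix ι ι ℝ}

theorem integral_exp_neg_quadratic_pos (hB : B.PosDef) : 0 < ∫ z, exp (-(z ⬝ᵥ B *ᵥ z) / 2) := by
  obtain ⟨U, hU, e, he, rfl⟩ := hB.exists_conj_diagonal
  rw [← integral_comp_unitary_mulVec hU]
  simp only [exp_neg_quadratic_conj_diagonal hU]
  exact integral_prod_exp_neg_mul_sq_pos fun i => half_pos (he i)

theorem integral_affine_mul_affine_mul_exp_neg_quadratic (hB : B.PosDef) (a a' : ι → ℝ)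
    (α α' : ℝ) :
    ∫ z, (a ⬝ᵥ z + α) * (a' ⬝ᵥ z + α') * exp (-(z ⬝ᵥ B *ᵥ z) / 2) =
      (a ⬝ᵥ B⁻¹ *ᵥ a' + α * α') * ∫ z, exp (-(z ⬝ᵥ B *ᵥ z) / 2) := by
  obtain ⟨U, hU, e, he, rfl⟩ := hB.exists_conj_diagonal
  conv_lhs => rw [← integral_comp_unitary_mulVec hU]
  conv_rhs => rw [← integral_comp_unitary_mulVec hU]
  simp only [exp_neg_quadratic_conj_diagonal hU, dotProduct_mulVec_eq_star_mulVec_dotProduct U]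
  rw [integral_affine_mul_affine_mul_prod_exp_neg_mul_sq fun i => half_pos (he i),
    conj_diagonal_inv hU fun i => (he i).ne', dotProduct_conj_diagonal_mulVec]
  congr 2
  exact Finset.sum_congr rfl fun i _ => by simp only [Pi.inv_apply]; ring

theorem integral_affine_mul_affine_mul_div_integral (hB : B.PosDef) {ρ : (ι → ℝ) → ℝ} {K : ℝ}
    (hK : K ≠ 0) (m : ι → ℝ) (hρ : ∀ x, ρ x = K * exp (-((x - m) ⬝ᵥ B *ᵥ (x - m)) / 2))
    (a a' : ι → ℝ) (α α' : ℝ) :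
    ∫ x, (a ⬝ᵥ (x - m) + α) * (a' ⬝ᵥ (x - m) + α') * (ρ x / ∫ x, ρ x) =
      a ⬝ᵥ B⁻¹ *ᵥ a' + α * α' := by
  have hG := integral_exp_neg_quadratic_pos hB
  have hZ : ∫ x, ρ x = K * ∫ z, exp (-(z ⬝ᵥ B *ᵥ z) / 2) := by
    simp only [hρ, integral_const_mul]
    rw [integral_sub_right_eq_self (fun z => exp (-(z ⬝ᵥ B *ᵥ z) / 2)) m]
  have hmoment := integral_affine_mul_affine_mul_exp_neg_quadratic hB a a' α α'
  rw [← integral_sub_right_eq_self _ m] at hmoment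
  rw [hZ]
  simp_rw [hρ, mul_div_mul_left _ _ hK, ← mul_div_assoc, integral_div, hmoment]
  exact mul_div_cancel_right₀ _ hG.ne'

end Gaussian

theorem isSymm_transpose_mul_self' {m n : Type*} [Fintype m] (A : Matrix m n ℝ) :
    (Aᵀ * A).IsSymm := by
  rw [IsSymm, transpose_mul, transpose_transpose]

section Symmetric

variable {n : Type*} [Fintype n]

theorem dotProduct_sub_mulVec_sub {B : Matrix n n ℝ} (hB : B.IsSymm) {c u : n → ℝ}
    (hc : B *ᵥ c = u) (x : n → ℝ) :
    (x - c) ⬝ᵥ B *ᵥ (x - c) = x ⬝ᵥ B *ᵥ x - 2 * (u ⬝ᵥ x) + c ⬝ᵥ u := by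
  have hcx : c ⬝ᵥ B *ᵥ x = u ⬝ᵥ x := by
    rw [dotProduct_mulVec, ← mulVec_transpose, hB.eq, hc]
  rw [mulVec_sub, hc, dotProduct_sub, sub_dotProduct, sub_dotProduct, hcx, dotProduct_comm x u]
  ring

theorem Matrix.IsSymm.mul_mul_apply {C : Matrix n n ℝ} (hC : C.IsSymm) (P : Matrix n n ℝ)
    (i j : n) :
    (C * P * C) i j = C i ⬝ᵥ P *ᵥ C j := by
  nth_rw 2 [← hC.eq]
  simp only [dotProduct, mulVec, Matrix.mul_apply, transpose_apply, Finset.sum_mul,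
    Finset.mul_sum]
  rw [Finset.sum_comm]
  exact Finset.sum_congr rfl fun k _ => Finset.sum_congr rfl fun l _ => by ring

theorem Matrix.IsSymm.mul_vecMulVec_mul {P : Matrix n n ℝ} (hP : P.IsSymm) (u : n → ℝ) :
    P * vecMulVec u u * P = vecMulVec (P *ᵥ u) (P *ᵥ u) := by
  rw [mul_vecMulVec, vecMulVec_mul, ← mulVec_transpose, hP.eq]

end Symmetric

section LinearModel

variable {m n : Type*} [Fintype m] [Fintype n] [DecidableEq n] (A : Matrix m n ℝ) (y : m → ℝ)

theorem sum_sq_sub_add_sum_sq {c : n → ℝ} (hc : (Aᵀ * A + 1) *ᵥ c = Aᵀ *ᵥ y) (x : n → ℝ) :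
    ∑ i, ((A *ᵥ x) i - y i) ^ 2 + ∑ i, x i ^ 2 =
      (x - c) ⬝ᵥ (Aᵀ * A + 1) *ᵥ (x - c) + (y ⬝ᵥ y - c ⬝ᵥ Aᵀ *ᵥ y) := by
  rw [dotProduct_sub_mulVec_sub ((isSymm_transpose_mul_self' A).add isSymm_one) hc, add_mulVec,
    one_mulVec, dotProduct_add, ← mulVec_mulVec, dotProduct_mulVec x, vecMul_transpose,
    mulVec_transpose, ← dotProduct_mulVec]
  have h1 : ∑ i, ((A *ᵥ x) i - y i) ^ 2 = A *ᵥ x ⬝ᵥ A *ᵥ x - 2 * (A *ᵥ x ⬝ᵥ y) + y ⬝ᵥ y := by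
    simp only [dotProduct, sub_sq, Finset.sum_add_distrib, Finset.sum_sub_distrib, Finset.mul_sum]
    simp only [sq, mul_assoc]
  have h2 : ∑ i, x i ^ 2 = x ⬝ᵥ x := by simp only [dotProduct, sq]
  rw [h1, h2, dotProduct_comm (A *ᵥ x) y]
  ring

theorem transpose_mulVec_mulVec_sub {c : n → ℝ} (hc : (Aᵀ * A + 1) *ᵥ c = Aᵀ *ᵥ y)
    (x : n → ℝ) : Aᵀ *ᵥ (A *ᵥ x - y) = (Aᵀ * A) *ᵥ (x - c) - c := by
  rw [mulVec_sub, ← hc, add_mulVec, one_mulVec, mulVec_sub, mulVec_mulVec]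
  abel

theorem integral_score_mul_score_posterior (μ f : (n → ℝ) → ℝ) {c : ℝ} (hc : c ≠ 0)
    (hμ : ∀ x, μ x = c * exp (-(∑ i, x i ^ 2) / 2))
    (hf : ∀ x, f x = exp (-(∑ i, ((A *ᵥ x) i - y i) ^ 2) / 2)) (i j : n) :
    ∫ x, (Aᵀ *ᵥ (A *ᵥ x - y)) i * (Aᵀ *ᵥ (A *ᵥ x - y)) j * (f x * μ x / ∫ x, f x * μ x) =
      ((Aᵀ * A) * (Aᵀ * A + 1)⁻¹ * (Aᵀ * A) +
        (Aᵀ * A + 1)⁻¹ * vecMulVec (Aᵀ *ᵥ y) (Aᵀ *ᵥ y) * (Aᵀ * A + 1)⁻¹ : Matrix n n ℝ) i j := by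
  have hC := isSymm_transpose_mul_self' A
  have hB : (Aᵀ * A + 1).PosDef := by
    refine PosDef.posSemidef_add ?_ PosDef.one
    simpa using posSemidef_conjTranspose_mul_self A
  set mean := (Aᵀ * A + 1)⁻¹ *ᵥ (Aᵀ *ᵥ y)
  have hmean : (Aᵀ * A + 1) *ᵥ mean = Aᵀ *ᵥ y := by
    rw [mulVec_mulVec, mul_nonsing_inv _ ((isUnit_iff_isUnit_det _).mp hB.isUnit), one_mulVec]
  have hdensity : ∀ x, f x * μ x =
      c * exp (-(y ⬝ᵥ y - mean ⬝ᵥ Aᵀ *ᵥ y) / 2) *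
        exp (-((x - mean) ⬝ᵥ (Aᵀ * A + 1) *ᵥ (x - mean)) / 2) := fun x => by
    rw [hf, hμ, mul_left_comm, ← exp_add, mul_assoc, ← exp_add]
    congr 2
    linarith [sum_sq_sub_add_sum_sq A y hmean x]
  have hscore : ∀ x k, (Aᵀ *ᵥ (A *ᵥ x - y)) k = (Aᵀ * A) k ⬝ᵥ (x - mean) + -mean k :=
    fun x k => by
    rw [transpose_mulVec_mulVec_sub A y hmean, Pi.sub_apply, sub_eq_add_neg]
    rfl
  simp_rw [hscore]
  rw [integral_affine_mul_affine_mul_div_integral hB (mul_ne_zero hc (exp_pos _).ne') mean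
    hdensity, Matrix.add_apply, hC.mul_mul_apply, (hC.add isSymm_one).inv.mul_vecMulVec_mul,
    vecMulVec_apply]
  ring

end LinearModel

theorem Matrix.exists_mulVec_eq_zero_of_card_lt {κ ι K : Type*} [Fintype κ] [Fintype ι] [Field K]
    (Φ : Matrix κ ι K) (h : Fintype.card κ < Fintype.card ι) : ∃ x ≠ 0, Φ *ᵥ x = 0 := by
  obtain ⟨x, hx, hx0⟩ := (Submodule.ne_bot_iff _).mp <|
    LinearMap.ker_ne_bot_of_finrank_lt (f := Φ.mulVecLin) (by simpa using h)
  exact ⟨x, hx0, hx⟩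

theorem eigenvalue_succ_le_of_eq_add_vecMulVec {d : ℕ} {U V : Matrix (Fin d) (Fin d) ℝ}
    (hU : U ∈ unitaryGroup (Fin d) ℝ) (hV : V ∈ unitaryGroup (Fin d) ℝ) {e f : Fin d → ℝ}
    {σ τ : Equiv.Perm (Fin d)} (he : Antitone (e ∘ σ)) (hf : Antitone (f ∘ τ)) (w : Fin d → ℝ)
    (h : V * diagonal f * star V = U * diagonal e * star U + vecMulVec w w) {i j : Fin d}
    (hij : (j : ℕ) = i + 1) : f (τ j) ≤ e (σ i) := by
  let Φ : Matrix (Finset.Iio i ⊕ Unit ⊕ Finset.Ioi j) (Fin d) ℝ :=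
    Matrix.of <| Sum.elim (fun r => star U (σ r)) <| Sum.elim (fun _ => w) fun r => star V (τ r)
  obtain ⟨x, hx, hΦx⟩ := Φ.exists_mulVec_eq_zero_of_card_lt (by
    rw [Fintype.card_sum, Fintype.card_sum, Fintype.card_coe, Fintype.card_coe, Fin.card_Iio,
      Fin.card_Ioi, Fintype.card_unit, Fintype.card_fin]
    omega)
  have hxU : ∀ r, r < i → (star U *ᵥ x) (σ r) = 0 := fun r hr =>
    congrFun hΦx (.inl ⟨r, Finset.mem_Iio.2 hr⟩)
  have hxw : w ⬝ᵥ x = 0 := congrFun hΦx (.inr (.inl ()))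
  have hxV : ∀ r, j < r → (star V *ᵥ x) (τ r) = 0 := fun r hr =>
    congrFun hΦx (.inr (.inr ⟨r, Finset.mem_Ioi.2 hr⟩))
  have hxx : 0 < x ⬝ᵥ x :=
    (Finset.sum_nonneg fun r _ => mul_self_nonneg (x r)).lt_of_ne
      (Ne.symm (dotProduct_self_eq_zero.not.2 hx))
  refine le_of_mul_le_mul_right ?_ hxx
  calc f (τ j) * (x ⬝ᵥ x) ≤ x ⬝ᵥ (V * diagonal f * star V) *ᵥ x :=
        le_dotProduct_conj_diagonal_mulVec hV hf hxV
    _ = x ⬝ᵥ (U * diagonal e * star U) *ᵥ x := by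
        rw [h, add_mulVec, dotProduct_add, vecMulVec_mulVec]
        simp [hxw]
    _ ≤ e (σ i) * (x ⬝ᵥ x) := dotProduct_conj_diagonal_mulVec_le hU he hxU

theorem sq_div_one_add_le_sq_div_one_add {a b : ℝ} (ha : 0 ≤ a) (hab : a ≤ b) :
    a ^ 2 / (1 + a) ≤ b ^ 2 / (1 + b) := by
  rw [div_le_div_iff₀ (by linarith) (by linarith)]
  nlinarith [mul_nonneg (sub_nonneg.2 hab) (add_nonneg (add_nonneg ha (ha.trans hab))
    (mul_nonneg ha (ha.trans hab)))]

/-- In the linear Gaussian setting, with posterior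
`π = N((C_A+I)⁻¹u, (C_A+I)⁻¹)` (`u = Aᵀy`, `C_A = AᵀA`) written as `π = fμ/Z`,
the matrix `H_1 = ∫ ∇log f ∇log fᵀ π dx` equals
`C_A(C_A+I)⁻¹C_A + (C_A+I)⁻¹ u uᵀ (C_A+I)⁻¹`, and
`λ_{k+1}(H_1) ≤ λ_k(C_A)²/(1 + λ_k(C_A))` for decreasingly ordered eigenvalues. -/
theorem stmt_18 {d dy : ℕ} (A : Matrix (Fin dy) (Fin d) ℝ) (y : Fin dy → ℝ)
    (μ : (Fin d → ℝ) → ℝ)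
    (hμ : ∀ x, μ x = (2 * Real.pi) ^ (-(d : ℝ) / 2) * Real.exp (-(∑ i, (x i) ^ 2) / 2))
    (f : (Fin d → ℝ) → ℝ)
    (hf : ∀ x, f x = Real.exp (-(∑ i, (A.mulVec x i - y i) ^ 2) / 2))
    (Z : ℝ) (hZ : Z = ∫ x, f x * μ x)
    (H1 : Matrix (Fin d) (Fin d) ℝ)
    (hH1 : ∀ i j, H1 i j =
      ∫ x, (Aᵀ.mulVec (A.mulVec x - y) i) * (Aᵀ.mulVec (A.mulVec x - y) j) *
        (f x * μ x / Z))
    (hCA : (Aᵀ * A).IsHermitian)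
    (hRHS : ((Aᵀ * A) * (Aᵀ * A + 1)⁻¹ * (Aᵀ * A) +
      (Aᵀ * A + 1)⁻¹ * Matrix.vecMulVec (Aᵀ.mulVec y) (Aᵀ.mulVec y) *
        (Aᵀ * A + 1)⁻¹).IsHermitian)
    (μ1 μC : Fin d → ℝ) (ha1 : Antitone μ1) (haC : Antitone μC)
    (e1 : ∃ σ : Equiv.Perm (Fin d), μ1 = hRHS.eigenvalues ∘ σ)
    (eC : ∃ σ : Equiv.Perm (Fin d), μC = hCA.eigenvalues ∘ σ) :
    H1 = (Aᵀ * A) * (Aᵀ * A + 1)⁻¹ * (Aᵀ * A) +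
        (Aᵀ * A + 1)⁻¹ * Matrix.vecMulVec (Aᵀ.mulVec y) (Aᵀ.mulVec y) *
          (Aᵀ * A + 1)⁻¹ ∧
      ∀ (k : ℕ) (hk : k + 1 < d),
        μ1 ⟨k + 1, hk⟩ ≤ (μC ⟨k, by omega⟩) ^ 2 / (1 + μC ⟨k, by omega⟩) := by
  refine ⟨Matrix.ext fun i j => ?_, fun k hk => ?_⟩
  · rw [hH1, hZ]
    exact integral_score_mul_score_posterior A y μ f (by positivity) hμ hf i j
  obtain ⟨σ1, rfl⟩ := e1
  obtain ⟨σC, rfl⟩ := eC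
  have hev : ∀ i, 0 ≤ hCA.eigenvalues i := by
    simpa using (posSemidef_conjTranspose_mul_self A).eigenvalues_nonneg
  obtain ⟨U, hU, hCU⟩ := hCA.exists_conj_diagonal
  obtain ⟨V, hV, hMV⟩ := hRHS.exists_conj_diagonal
  refine eigenvalue_succ_le_of_eq_add_vecMulVec hU hV (e := fun i => hCA.eigenvalues i ^ 2 /
    (1 + hCA.eigenvalues i)) (fun a b hab => sq_div_one_add_le_sq_div_one_add (hev _) (haC hab))
    ha1 ((Aᵀ * A + 1)⁻¹ *ᵥ Aᵀ *ᵥ y) ?_ (i := ⟨k, by omega⟩) (j := ⟨k + 1, hk⟩) rfl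
  rw [← hMV, ← conj_diagonal_mul_inv_add_one_mul hU hev, ← hCU,
    ((isSymm_transpose_mul_self' A).add isSymm_one).inv.mul_vecMulVec_mul]
end
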